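/- arXiv:cs/0201009 — 9 statements merged into one kernel-verified Lean document; each statement's English description precedes it below -/
import Mathlib

section
/- Let n ≥ 1 and let p_1, …, p_n ∈ [0,1). Define T = ∑_{k=1}^∞ (1 − ∏_{i=1}^n (1 − p_i^k)) (the expected convergence time of the batch learner under the independence hypothesis). Then max_{1 ≤ i ≤ n} p_i/(1 − p_i) ≤ T ≤ ∑_{i=1}^n p_i/(1 − p_i); in particular T is finite and T ≤ ∑_{i=1}^n 1/(1 − p_i). -/
lemma weierstrass_aux {ι : Type*} (s : Finset ι) (x : ι → ℝ)
    (hx : ∀ i ∈ s, 0 ≤ x i ∧ x i ≤ 1) :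
    1 - ∑ i ∈ s, x i ≤ ∏ i ∈ s, (1 - x i) := by
  classical
  induction s using Finset.induction_on with
  | empty => simp
  | @insert a s hins ih =>
    have ha := hx
    rw [Finset.sum_insert hins, Finset.prod_insert hins]
    have hxa := ha a (Finset.mem_insert_self a s)
    have hrec := ih (fun i hi => ha i (Finset.mem_insert_of_mem hi))
    have hsum : 0 ≤ ∑ i ∈ s, x i :=
      Finset.sum_nonneg fun i hi => (ha i (Finset.mem_insert_of_mem hi)).1
    have h1 : (1 - x a) * (1 - ∑ i ∈ s, x i) ≤ (1 - x a) * ∏ i ∈ s, (1 - x i) :=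
      mul_le_mul_of_nonneg_left hrec (by linarith [hxa.2])
    nlinarith [hxa.1, hxa.2]

lemma prod_one_sub_le {ι : Type*} [Fintype ι] (x : ι → ℝ)
    (hx : ∀ i, 0 ≤ x i ∧ x i ≤ 1) (j : ι) :
    ∏ i, (1 - x i) ≤ 1 - x j := by
  classical
  rw [← Finset.mul_prod_erase Finset.univ _ (Finset.mem_univ j)]
  have h1 : ∏ i ∈ Finset.univ.erase j, (1 - x i) ≤ 1 :=
    Finset.prod_le_one (fun i _ => by linarith [(hx i).2]) (fun i _ => by linarith [(hx i).1])
  nlinarith [(hx j).1, (hx j).2, Finset.prod_nonneg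
    (fun i (_ : i ∈ Finset.univ.erase j) => by linarith [(hx i).2] : ∀ i ∈ Finset.univ.erase j, (0:ℝ) ≤ 1 - x i)]

/-- For `n ≥ 1` and `p_1, …, p_n ∈ [0,1)`, the expected convergence time
`T = ∑_{k=1}^∞ (1 − ∏_{i=1}^n (1 − p_i^k))` of the batch learner is well defined (the series
is summable) and satisfies `max_i p_i/(1−p_i) ≤ T ≤ ∑_i p_i/(1−p_i)`; in particular
`T ≤ ∑_i 1/(1−p_i)`. -/
theorem batch_learner_expected_time_bounds
    (n : ℕ) (hn : 1 ≤ n) (p : Fin n → ℝ) (hp : ∀ i, p i ∈ Set.Ico (0 : ℝ) 1) :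
    Summable (fun k : ℕ => 1 - ∏ i, (1 - p i ^ (k + 1))) ∧
    (∀ i, p i / (1 - p i) ≤ ∑' k : ℕ, (1 - ∏ i, (1 - p i ^ (k + 1)))) ∧
    (∑' k : ℕ, (1 - ∏ i, (1 - p i ^ (k + 1)))) ≤ ∑ i, p i / (1 - p i) ∧
    (∑' k : ℕ, (1 - ∏ i, (1 - p i ^ (k + 1)))) ≤ ∑ i, 1 / (1 - p i) := by
  have hp0 : ∀ i, 0 ≤ p i := fun i => (hp i).1
  have hp1 : ∀ i, p i < 1 := fun i => (hp i).2
  have hpow : ∀ (k : ℕ) (i : Fin n), 0 ≤ p i ^ (k + 1) ∧ p i ^ (k + 1) ≤ 1 := by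
    intro k i
    exact ⟨pow_nonneg (hp0 i) _, pow_le_one₀ (hp0 i) (hp1 i).le⟩
  -- pointwise bounds
  have hub : ∀ k : ℕ, 1 - ∏ i, (1 - p i ^ (k + 1)) ≤ ∑ i, p i ^ (k + 1) := by
    intro k
    have := weierstrass_aux Finset.univ (fun i => p i ^ (k + 1))
      (fun i _ => hpow k i)
    linarith
  have hlb : ∀ (k : ℕ) (j : Fin n), p j ^ (k + 1) ≤ 1 - ∏ i, (1 - p i ^ (k + 1)) := by
    intro k j
    have := prod_one_sub_le (fun i => p i ^ (k + 1)) (hpow k) j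
    linarith
  have h0 : ∀ k : ℕ, 0 ≤ 1 - ∏ i, (1 - p i ^ (k + 1)) := by
    intro k
    have h1 : ∏ i, (1 - p i ^ (k + 1)) ≤ 1 :=
      Finset.prod_le_one (fun i _ => by linarith [(hpow k i).2])
        (fun i _ => by linarith [(hpow k i).1])
    linarith
  -- geometric summability per i
  have hgeom : ∀ i : Fin n, Summable (fun k : ℕ => p i ^ (k + 1)) := by
    intro i
    have := (summable_geometric_of_lt_one (hp0 i) (hp1 i)).mul_right (p i)
    simpa [pow_succ] using this
  have hgeomsum : ∀ i : Fin n, (∑' k : ℕ, p i ^ (k + 1)) = p i / (1 - p i) := by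
    intro i
    have : (fun k : ℕ => p i ^ (k + 1)) = fun k : ℕ => p i * p i ^ k := by
      funext k; rw [pow_succ']
    rw [this, tsum_mul_left, tsum_geometric_of_lt_one (hp0 i) (hp1 i), div_eq_mul_inv]
  have hG : Summable (fun k : ℕ => ∑ i, p i ^ (k + 1)) :=
    summable_sum (fun i _ => hgeom i)
  have hS : Summable (fun k : ℕ => 1 - ∏ i, (1 - p i ^ (k + 1))) :=
    Summable.of_nonneg_of_le h0 hub hG
  refine ⟨hS, ?_, ?_, ?_⟩
  · intro j
    rw [← hgeomsum j]
    exact Summable.tsum_le_tsum (fun k => hlb k j) (hgeom j) hS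
  · calc (∑' k : ℕ, (1 - ∏ i, (1 - p i ^ (k + 1))))
        ≤ ∑' k : ℕ, ∑ i, p i ^ (k + 1) := Summable.tsum_le_tsum hub hS hG
      _ = ∑ i, ∑' k : ℕ, p i ^ (k + 1) := Summable.tsum_finsetSum (fun i _ => hgeom i)
      _ = ∑ i, p i / (1 - p i) := by simp_rw [hgeomsum]
  · calc (∑' k : ℕ, (1 - ∏ i, (1 - p i ^ (k + 1))))
        ≤ ∑' k : ℕ, ∑ i, p i ^ (k + 1) := Summable.tsum_le_tsum hub hS hG
      _ = ∑ i, ∑' k : ℕ, p i ^ (k + 1) := Summable.tsum_finsetSum (fun i _ => hgeom i)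
      _ = ∑ i, p i / (1 - p i) := by simp_rw [hgeomsum]
      _ ≤ ∑ i, 1 / (1 - p i) := by
          apply Finset.sum_le_sum
          intro i _
          apply div_le_div_of_nonneg_right ?_ ?_ |>.trans_eq rfl
          · exact (hp1 i).le
          · linarith [hp1 i]
end

section
/- Let n ≥ 1 and let p_1, …, p_n ∈ [0,1). For a nonempty subset s ⊆ {1,…,n} write p_s = ∏_{i∈s} p_i. Then ∑_{k=1}^∞ (1 − ∏_{i=1}^n (1 − p_i^k)) = ∑_{∅ ≠ s ⊆ {1,…,n}} (−1)^{|s|−1} (1/(1 − p_s) − 1), where all sums converge absolutely. -/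
/-!
Expanding `∏ i (1 - p_i^k)` by inclusion–exclusion writes the `k`-th term of the series as the
finite signed sum `∑_{s ≠ ∅} (-1)^{|s|-1} p_s^k`. Each `p_s` lies in `[0, 1)`, so each of
these finitely many geometric series converges, to `p_s / (1 - p_s) = 1 / (1 - p_s) - 1`, and
the series can be summed term by term.
-/

open Finset

theorem Finset.prod_lt_one_of_nonempty {ι R : Type*} [CommSemiring R] [PartialOrder R]
    [IsOrderedRing R] {s : Finset ι} {f : ι → R} (hs : s.Nonempty)
    (h0 : ∀ i ∈ s, 0 ≤ f i) (h1 : ∀ i ∈ s, f i < 1) : ∏ i ∈ s, f i < 1 := by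
  classical
  obtain ⟨i, hi⟩ := hs
  calc ∏ j ∈ s, f j = f i * ∏ j ∈ s.erase i, f j := (mul_prod_erase s f hi).symm
    _ ≤ f i * 1 := by
        gcongr
        · exact h0 i hi
        · exact prod_le_one (fun j hj => h0 j (mem_of_mem_erase hj))
            (fun j hj => (h1 j (mem_of_mem_erase hj)).le)
    _ < 1 := by simpa using h1 i hi

theorem Finset.one_sub_prod_one_sub {ι R : Type*} [CommRing R] [DecidableEq ι]
    (s : Finset ι) (x : ι → R) :
    1 - ∏ i ∈ s, (1 - x i) =
      ∑ t ∈ s.powerset.filter (·.Nonempty), (-1) ^ (#t - 1) * ∏ i ∈ t, x i := by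
  have hexpand : ∏ i ∈ s, (1 - x i) = ∑ t ∈ s.powerset, (-1) ^ #t * ∏ i ∈ t, x i := by
    simpa [sub_eq_neg_add, prod_neg] using prod_add (fun i => -x i) (fun _ => (1 : R)) s
  have hnonempty : s.powerset.filter (·.Nonempty) = s.powerset.erase ∅ := by
    ext t
    simp [nonempty_iff_ne_empty, and_comm]
  have hsign : ∀ t ∈ s.powerset.erase ∅,
      (-1 : R) ^ (#t - 1) * ∏ i ∈ t, x i = -((-1) ^ #t * ∏ i ∈ t, x i) := by
    intro t ht
    have hcard : 0 < #t := card_pos.2 (nonempty_iff_ne_empty.2 (ne_of_mem_erase ht))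
    obtain ⟨c, hc⟩ := Nat.exists_eq_add_of_lt hcard
    rw [hc]
    simp [pow_succ]
  rw [hexpand, hnonempty, sum_congr rfl hsign, sum_neg_distrib,
    ← add_sum_erase _ _ (empty_mem_powerset s)]
  simp

theorem hasSum_pow_succ_of_lt_one {r : ℝ} (h0 : 0 ≤ r) (h1 : r < 1) :
    HasSum (fun k : ℕ => r ^ (k + 1)) (1 / (1 - r) - 1) := by
  simpa using (hasSum_nat_add_iff' 1).2 (hasSum_geometric_of_lt_one h0 h1)

theorem batch_learner_inclusion_exclusion_general
    (n : ℕ) (p : Fin n → ℝ) (hp : ∀ i, p i ∈ Set.Ico (0 : ℝ) 1) :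
    Summable (fun k : ℕ => |1 - ∏ i, (1 - p i ^ (k + 1))|) ∧
    (∑' k : ℕ, (1 - ∏ i, (1 - p i ^ (k + 1)))) =
      ∑ s ∈ Finset.univ.powerset.filter (fun s : Finset (Fin n) => s.Nonempty),
        (-1 : ℝ) ^ (s.card - 1) * (1 / (1 - ∏ i ∈ s, p i) - 1) := by
  have hgeom : ∀ s ∈ univ.powerset.filter (fun s : Finset (Fin n) => s.Nonempty),
      HasSum (fun k : ℕ => (-1 : ℝ) ^ (#s - 1) * (∏ i ∈ s, p i) ^ (k + 1))
        ((-1) ^ (#s - 1) * (1 / (1 - ∏ i ∈ s, p i) - 1)) := fun s hs =>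
    (hasSum_pow_succ_of_lt_one (prod_nonneg fun i _ => (hp i).1)
      (prod_lt_one_of_nonempty (mem_filter.1 hs).2 (fun i _ => (hp i).1)
        (fun i _ => (hp i).2))).mul_left _
  have hsum : HasSum (fun k : ℕ => 1 - ∏ i, (1 - p i ^ (k + 1)))
      (∑ s ∈ univ.powerset.filter (fun s : Finset (Fin n) => s.Nonempty),
        (-1 : ℝ) ^ (#s - 1) * (1 / (1 - ∏ i ∈ s, p i) - 1)) := by
    simpa only [one_sub_prod_one_sub, prod_pow] using hasSum_sum hgeom
  exact ⟨summable_abs_iff.2 hsum.summable, hsum.tsum_eq⟩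

/-- For `n ≥ 1` and `p_1, …, p_n ∈ [0,1)`, writing `p_s = ∏_{i ∈ s} p_i` for
nonempty `s ⊆ {1,…,n}`, we have
`∑_{k=1}^∞ (1 − ∏_i (1 − p_i^k)) = ∑_{∅ ≠ s} (−1)^{|s|−1} (1/(1−p_s) − 1)`,
where the infinite sum converges absolutely. -/
theorem batch_learner_inclusion_exclusion
    (n : ℕ) (hn : 1 ≤ n) (p : Fin n → ℝ) (hp : ∀ i, p i ∈ Set.Ico (0 : ℝ) 1) :
    Summable (fun k : ℕ => |1 - ∏ i, (1 - p i ^ (k + 1))|) ∧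
    (∑' k : ℕ, (1 - ∏ i, (1 - p i ^ (k + 1)))) =
      ∑ s ∈ Finset.univ.powerset.filter (fun s : Finset (Fin n) => s.Nonempty),
        (-1 : ℝ) ^ (s.card - 1) * (1 / (1 - ∏ i ∈ s, p i) - 1) :=
  batch_learner_inclusion_exclusion_general n p hp
end

section
/- Let F be a Borel probability measure on [0,1] with F({1}) = 0, and let x_1, …, x_n be independent random variables each with distribution F. Let m_k(F) = ∫₀¹ x^k dF(x) denote the k-th moment of F. If the series ∑_{k=0}^∞ m_k(F)^n converges, then the random variable 1/(1 − x_1 x_2 ⋯ x_n) is integrable and E[1/(1 − x_1 ⋯ x_n)] = ∑_{k=0}^∞ m_k(F)^n = 1 + ζ_F(n); if the series diverges, the expectation is infinite. -/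
/-!
For `t ∈ [0, 1)` one has `1 / (1 - t) = ∑ₖ tᵏ`, and since `F` is carried by `[0, 1)` and
`n ≥ 1`, the product `P = x₁ ⋯ xₙ` lies in `[0, 1)` almost surely. Monotone convergence therefore gives
`E[1 / (1 - P)] = ∑ₖ E[Pᵏ]` in `[0, ∞]`, and by independence `E[Pᵏ] = ∏ᵢ E[xᵢᵏ] = m_k(F)ⁿ`.
-/

open MeasureTheory ProbabilityTheory

lemma Finset.prod_mem_Ico_of_mem_Ico {ι R : Type*} [CommMonoidWithZero R] [PartialOrder R]
    [ZeroLEOneClass R] [PosMulMono R] {s : Finset ι} {f : ι → R} (hs : s.Nonempty)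
    (hf : ∀ i ∈ s, f i ∈ Set.Ico 0 1) : ∏ i ∈ s, f i ∈ Set.Ico 0 1 := by
  classical
  obtain ⟨j, hj⟩ := hs
  refine ⟨Finset.prod_nonneg fun i hi => (hf i hi).1, ?_⟩
  rw [← Finset.mul_prod_erase s f hj]
  exact mul_lt_one_of_nonneg_of_lt_one_left (hf j hj).1 (hf j hj).2 <|
    Finset.prod_le_one (fun i hi => (hf i (Finset.mem_of_mem_erase hi)).1)
      fun i hi => (hf i (Finset.mem_of_mem_erase hi)).2.le

lemma ae_mem_Ico_of_measure_compl_Icc_eq_zero {μ : Measure ℝ} (hsupp : μ (Set.Icc 0 1)ᶜ = 0)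
    (h1 : μ {1} = 0) : ∀ᵐ t ∂μ, t ∈ Set.Ico (0 : ℝ) 1 := by
  rw [← Set.Icc_sdiff_right]
  filter_upwards [measure_eq_zero_iff_ae_notMem.1 hsupp, measure_eq_zero_iff_ae_notMem.1 h1]
    with t hIcc hne
  exact ⟨not_not.1 hIcc, hne⟩

lemma ProbabilityTheory.iIndepFun.integral_prod_pow_eq_moment_pow {Ω ι : Type*}
    [MeasurableSpace Ω] {P : Measure Ω} [Fintype ι] {X : ι → Ω → ℝ} (hX : iIndepFun X P)
    (hmeas : ∀ i, AEMeasurable (X i) P) {μ : Measure ℝ} (hdist : ∀ i, P.map (X i) = μ) (k : ℕ) :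
    ∫ ω, (∏ i, X i ω) ^ k ∂P = (∫ t, t ^ k ∂μ) ^ Fintype.card ι := by
  simp_rw [← Finset.prod_pow]
  rw [hX.integral_fun_prod_comp (f := fun _ t => t ^ k) hmeas
    fun _ => (continuous_pow k).aestronglyMeasurable]
  simp_rw [← integral_map (hmeas _) (continuous_pow k).aestronglyMeasurable, hdist]
  rw [Finset.prod_const, Finset.card_univ]

section GeometricSeries

variable {Ω : Type*} [MeasurableSpace Ω] {μ : Measure Ω} {X : Ω → ℝ}

lemma integral_pow_nonneg_of_ae_nonneg (hX : 0 ≤ᵐ[μ] X) (k : ℕ) : 0 ≤ ∫ ω, X ω ^ k ∂μ :=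
  integral_nonneg_of_ae <| by filter_upwards [hX] with ω hω using pow_nonneg hω k

lemma ae_nonneg_one_div_one_sub (hX : ∀ᵐ ω ∂μ, X ω ≤ 1) : 0 ≤ᵐ[μ] fun ω => 1 / (1 - X ω) := by
  filter_upwards [hX] with ω hω
  exact one_div_nonneg.2 (sub_nonneg.2 hω)

lemma lintegral_ofReal_one_div_one_sub_eq_tsum [IsFiniteMeasure μ] (hX : AEMeasurable X μ)
    (hX01 : ∀ᵐ ω ∂μ, X ω ∈ Set.Ico 0 1) :
    ∫⁻ ω, ENNReal.ofReal (1 / (1 - X ω)) ∂μ = ∑' k : ℕ, ENNReal.ofReal (∫ ω, X ω ^ k ∂μ) := by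
  have geometric : ∀ᵐ ω ∂μ,
      ENNReal.ofReal (1 / (1 - X ω)) = ∑' k : ℕ, ENNReal.ofReal (X ω ^ k) := by
    filter_upwards [hX01] with ω hω
    rw [one_div, ← tsum_geometric_of_lt_one hω.1 hω.2, ENNReal.ofReal_tsum_of_nonneg
      (fun k => pow_nonneg hω.1 k) (summable_geometric_of_lt_one hω.1 hω.2)]
  have moment : ∀ k : ℕ,
      ∫⁻ ω, ENNReal.ofReal (X ω ^ k) ∂μ = ENNReal.ofReal (∫ ω, X ω ^ k ∂μ) := by
    intro k
    refine (ofReal_integral_eq_lintegral_ofReal ?_ ?_).symm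
    · refine Integrable.of_bound (hX.pow_const k).aestronglyMeasurable 1 ?_
      filter_upwards [hX01] with ω hω
      rw [Real.norm_eq_abs, abs_of_nonneg (pow_nonneg hω.1 k)]
      exact pow_le_one₀ hω.1 hω.2.le
    · filter_upwards [hX01] with ω hω using pow_nonneg hω.1 k
  rw [lintegral_congr_ae geometric,
    lintegral_tsum fun k => (hX.pow_const k).ennreal_ofReal]
  simp_rw [moment]

variable [IsFiniteMeasure μ] (hX : AEMeasurable X μ) (hX01 : ∀ᵐ ω ∂μ, X ω ∈ Set.Ico 0 1)
include hX hX01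

lemma lintegral_ofReal_one_div_one_sub_eq_ofReal_tsum
    (hs : Summable fun k : ℕ => ∫ ω, X ω ^ k ∂μ) :
    ∫⁻ ω, ENNReal.ofReal (1 / (1 - X ω)) ∂μ = ENNReal.ofReal (∑' k : ℕ, ∫ ω, X ω ^ k ∂μ) := by
  rw [lintegral_ofReal_one_div_one_sub_eq_tsum hX hX01,
    ENNReal.ofReal_tsum_of_nonneg
      (integral_pow_nonneg_of_ae_nonneg (hX01.mono fun _ => And.left)) hs]

lemma integrable_one_div_one_sub_of_summable (hs : Summable fun k : ℕ => ∫ ω, X ω ^ k ∂μ) :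
    Integrable (fun ω => 1 / (1 - X ω)) μ := by
  refine (lintegral_ofReal_ne_top_iff_integrable ((hX.const_sub 1).const_div 1).aestronglyMeasurable
    (ae_nonneg_one_div_one_sub (hX01.mono fun _ h => h.2.le))).1 ?_
  rw [lintegral_ofReal_one_div_one_sub_eq_ofReal_tsum hX hX01 hs]
  exact ENNReal.ofReal_ne_top

lemma integral_one_div_one_sub_eq_tsum (hs : Summable fun k : ℕ => ∫ ω, X ω ^ k ∂μ) :
    ∫ ω, 1 / (1 - X ω) ∂μ = ∑' k : ℕ, ∫ ω, X ω ^ k ∂μ := by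
  rw [integral_eq_lintegral_of_nonneg_ae
      (ae_nonneg_one_div_one_sub (hX01.mono fun _ h => h.2.le))
      ((hX.const_sub 1).const_div 1).aestronglyMeasurable,
    lintegral_ofReal_one_div_one_sub_eq_ofReal_tsum hX hX01 hs, ENNReal.toReal_ofReal
      (tsum_nonneg (integral_pow_nonneg_of_ae_nonneg (hX01.mono fun _ => And.left)))]

lemma lintegral_ofReal_one_div_one_sub_eq_top (hs : ¬Summable fun k : ℕ => ∫ ω, X ω ^ k ∂μ) :
    ∫⁻ ω, ENNReal.ofReal (1 / (1 - X ω)) ∂μ = ⊤ := by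
  rw [lintegral_ofReal_one_div_one_sub_eq_tsum hX hX01]
  by_contra h
  refine hs ((ENNReal.summable_toReal h).congr fun k => ?_)
  exact ENNReal.toReal_ofReal (integral_pow_nonneg_of_ae_nonneg (hX01.mono fun _ => And.left) k)

end GeometricSeries

theorem expectation_inv_one_sub_prod_eq_moment_zeta_general
    (μ : Measure ℝ)
    (hsupp : μ (Set.Icc (0 : ℝ) 1)ᶜ = 0) (h1 : μ {(1 : ℝ)} = 0)
    (n : ℕ) (hn : 1 ≤ n)
    {Ω : Type*} [MeasureSpace Ω] [IsProbabilityMeasure (ℙ : Measure Ω)]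
    (x : Fin n → Ω → ℝ) (hmeas : ∀ i, Measurable (x i))
    (hindep : iIndepFun x ℙ)
    (hdist : ∀ i, Measure.map (x i) ℙ = μ) :
    (Summable (fun k : ℕ => (∫ t, t ^ k ∂μ) ^ n) →
      Integrable (fun ω => 1 / (1 - ∏ i, x i ω)) ℙ ∧
      (∫ ω, 1 / (1 - ∏ i, x i ω) ∂ℙ) = ∑' k : ℕ, (∫ t, t ^ k ∂μ) ^ n ∧
      (∫ ω, 1 / (1 - ∏ i, x i ω) ∂ℙ) = 1 + ∑' k : ℕ, (∫ t, t ^ (k + 1) ∂μ) ^ n) ∧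
    (¬ Summable (fun k : ℕ => (∫ t, t ^ k ∂μ) ^ n) →
      (∫⁻ ω, ENNReal.ofReal (1 / (1 - ∏ i, x i ω)) ∂ℙ) = ⊤) := by
  have hx01 : ∀ i, ∀ᵐ ω ∂ℙ, x i ω ∈ Set.Ico 0 1 := fun i =>
    ae_of_ae_map (hmeas i).aemeasurable <| (hdist i).symm ▸
      ae_mem_Ico_of_measure_compl_Icc_eq_zero hsupp h1
  have hP01 : ∀ᵐ ω ∂ℙ, ∏ i, x i ω ∈ Set.Ico 0 1 := by
    filter_upwards [ae_all_iff.2 hx01] with ω hω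
    exact Finset.prod_mem_Ico_of_mem_Ico ⟨⟨0, hn⟩, Finset.mem_univ _⟩ fun i _ => hω i
  have hP : AEMeasurable (fun ω => ∏ i, x i ω) ℙ :=
    Finset.aemeasurable_fun_prod _ fun i _ => (hmeas i).aemeasurable
  have hmoment : ∀ k : ℕ, ∫ ω, (∏ i, x i ω) ^ k ∂ℙ = (∫ t, t ^ k ∂μ) ^ n := by
    simpa only [Fintype.card_fin] using
      hindep.integral_prod_pow_eq_moment_pow (fun i => (hmeas i).aemeasurable) hdist
  simp_rw [← hmoment]
  refine ⟨fun hs => ⟨integrable_one_div_one_sub_of_summable hP hP01 hs,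
    integral_one_div_one_sub_eq_tsum hP hP01 hs, ?_⟩,
    lintegral_ofReal_one_div_one_sub_eq_top hP hP01⟩
  rw [integral_one_div_one_sub_eq_tsum hP hP01 hs, hs.tsum_eq_zero_add]
  simp

/-- Let `F` be a Borel probability measure on `[0,1]` with `F({1}) = 0`, and let
`x_1, …, x_n` be i.i.d. with distribution `F`.  With `m_k(F) = ∫ t^k dF(t)`, if `∑_{k=0}^∞ m_k^n`
converges then `1/(1 − x_1⋯x_n)` is integrable with expectation `∑_{k=0}^∞ m_k^n = 1 + ζ_F(n)`;
if the series diverges the expectation is infinite. -/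
theorem expectation_inv_one_sub_prod_eq_moment_zeta
    (μ : Measure ℝ) [IsProbabilityMeasure μ]
    (hsupp : μ (Set.Icc (0 : ℝ) 1)ᶜ = 0) (h1 : μ {(1 : ℝ)} = 0)
    (n : ℕ) (hn : 1 ≤ n)
    {Ω : Type*} [MeasureSpace Ω] [IsProbabilityMeasure (ℙ : Measure Ω)]
    (x : Fin n → Ω → ℝ) (hmeas : ∀ i, Measurable (x i))
    (hindep : iIndepFun x ℙ)
    (hdist : ∀ i, Measure.map (x i) ℙ = μ) :
    (Summable (fun k : ℕ => (∫ t, t ^ k ∂μ) ^ n) →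
      Integrable (fun ω => 1 / (1 - ∏ i, x i ω)) ℙ ∧
      (∫ ω, 1 / (1 - ∏ i, x i ω) ∂ℙ) = ∑' k : ℕ, (∫ t, t ^ k ∂μ) ^ n ∧
      (∫ ω, 1 / (1 - ∏ i, x i ω) ∂ℙ) = 1 + ∑' k : ℕ, (∫ t, t ^ (k + 1) ∂μ) ^ n) ∧
    (¬ Summable (fun k : ℕ => (∫ t, t ^ k ∂μ) ^ n) →
      (∫⁻ ω, ENNReal.ofReal (1 / (1 - ∏ i, x i ω)) ∂ℙ) = ⊤) :=
  expectation_inv_one_sub_prod_eq_moment_zeta_general μ hsupp h1 n hn x hmeas hindep hdist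
end

section
/- Let F be a Borel probability measure on [0,1] with density f with respect to Lebesgue measure, and suppose there exist constants c > 0, β > −1 and δ > 0 such that f(1−x) = c x^β + O(x^{β+δ}) as x → 0⁺. Then the moment zeta function ζ_F(s) = ∑_{k=1}^∞ m_k(F)^s converges for every real s > 1/(1+β). -/
/-!
Near `x = 1` the density is at most `B (1 - x)^β`, and `x^n ≤ exp (-n (1 - x))`, so the part of
the `n`-th moment coming from `[1 - ε, 1]` is at most `B Γ(β + 1) n^{-(β + 1)}`, while the part
coming from `[0, 1 - ε]` is at most `(1 - ε)^n`. Hence `m_n(F)^s` is dominated by a geometric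
series plus a `p`-series with `p = (β + 1) s > 1`.
-/

open MeasureTheory Real Set Filter Asymptotics Topology

lemma add_rpow_le_two_rpow_mul_add_rpow {a b s : ℝ} (ha : 0 ≤ a) (hb : 0 ≤ b) (hs : 0 ≤ s) :
    (a + b) ^ s ≤ 2 ^ s * (a ^ s + b ^ s) := by
  have hmax : max a b ^ s ≤ a ^ s + b ^ s := by
    rcases max_cases a b with ⟨h, _⟩ | ⟨h, _⟩ <;> rw [h]
    · linarith [rpow_nonneg hb s]
    · linarith [rpow_nonneg ha s]
  calc (a + b) ^ s ≤ (2 * max a b) ^ s := by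
        gcongr
        linarith [le_max_left a b, le_max_right a b]
    _ = 2 ^ s * max a b ^ s := mul_rpow zero_le_two (le_max_of_le_left ha)
    _ ≤ 2 ^ s * (a ^ s + b ^ s) := by gcongr

lemma summable_rpow_of_le_add {u a b : ℕ → ℝ} {s : ℝ} (hs : 0 ≤ s)
    (hu : ∀ k, 0 ≤ u k) (ha : ∀ k, 0 ≤ a k) (hb : ∀ k, 0 ≤ b k) (hle : ∀ k, u k ≤ a k + b k)
    (hsa : Summable fun k => a k ^ s) (hsb : Summable fun k => b k ^ s) :
    Summable fun k => u k ^ s :=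
  ((hsa.add hsb).mul_left (2 ^ s)).of_nonneg_of_le (fun k => rpow_nonneg (hu k) s) fun k =>
    (rpow_le_rpow (hu k) (hle k) hs).trans (add_rpow_le_two_rpow_mul_add_rpow (ha k) (hb k) hs)

lemma summable_pow_rpow {q s : ℝ} (hq0 : 0 ≤ q) (hq1 : q < 1) (hs : 0 < s) :
    Summable fun n : ℕ => (q ^ n) ^ s := by
  simp_rw [← rpow_pow_comm hq0]
  exact summable_geometric_of_lt_one (rpow_nonneg hq0 s) (rpow_lt_one hq0 hq1 hs)

lemma summable_mul_natCast_rpow_neg_rpow {D p s : ℝ} (hD : 0 ≤ D) (hps : 1 < p * s) :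
    Summable fun n : ℕ => (D * (n : ℝ) ^ (-p)) ^ s := by
  have h : ∀ n : ℕ, (D * (n : ℝ) ^ (-p)) ^ s = D ^ s * (n : ℝ) ^ (-(p * s)) := fun n => by
    rw [mul_rpow hD (rpow_nonneg n.cast_nonneg _), ← rpow_mul n.cast_nonneg, neg_mul]
  simp_rw [h]
  exact (summable_nat_rpow.mpr (by linarith)).mul_left _

lemma rpow_add_isBigO_rpow_nhdsGT_zero {β δ : ℝ} (hδ : 0 ≤ δ) :
    (fun y : ℝ => y ^ (β + δ)) =O[𝓝[>] 0] fun y => y ^ β := by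
  refine IsBigO.of_bound' ?_
  filter_upwards [Ioo_mem_nhdsGT one_pos] with y hy
  rw [norm_of_nonneg (rpow_nonneg hy.1.le _), norm_of_nonneg (rpow_nonneg hy.1.le _)]
  exact rpow_le_rpow_of_exponent_ge hy.1 hy.2.le (by linarith)

lemma isBigO_rpow_of_sub_isBigO {g : ℝ → ℝ} {c β δ : ℝ} (hδ : 0 ≤ δ)
    (h : (fun y => g y - c * y ^ β) =O[𝓝[>] 0] fun y => y ^ (β + δ)) :
    g =O[𝓝[>] 0] fun y => y ^ β := by
  simpa using (h.trans (rpow_add_isBigO_rpow_nhdsGT_zero hδ)).add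
    ((isBigO_refl (fun y : ℝ => y ^ β) _).const_mul_left c)

lemma exists_le_mul_rpow_of_isBigO {g : ℝ → ℝ} {β : ℝ} (h : g =O[𝓝[>] 0] fun y => y ^ β) :
    ∃ B ε, 0 ≤ B ∧ 0 < ε ∧ ε ≤ 1 ∧ ∀ y ∈ Ioo 0 ε, g y ≤ B * y ^ β := by
  obtain ⟨B, hB, hw⟩ := h.exists_pos
  obtain ⟨u, hu, hsub⟩ := mem_nhdsGT_iff_exists_Ioo_subset.mp hw.bound
  refine ⟨B, min u 1, hB.le, lt_min hu one_pos, min_le_right _ _, fun y hy => ?_⟩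
  have hy' : ‖g y‖ ≤ B * ‖y ^ β‖ := hsub ⟨hy.1, hy.2.trans_le (min_le_left _ _)⟩
  rw [norm_of_nonneg (rpow_nonneg hy.1.le _)] at hy'
  exact (le_abs_self _).trans hy'

lemma pow_le_exp_neg_mul_one_sub {x : ℝ} (hx : 0 ≤ x) (n : ℕ) :
    x ^ n ≤ exp (-(n * (1 - x))) :=
  calc x ^ n ≤ exp (x - 1) ^ n := pow_le_pow_left₀ hx (by linarith [add_one_le_exp (x - 1)]) n
    _ = exp (-(n * (1 - x))) := by rw [← exp_nat_mul]; ring_nf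

lemma intervalIntegral_rpow_mul_exp_neg_mul_le {β ε r : ℝ} (hβ : -1 < β) (hε : 0 ≤ ε)
    (hr : 0 < r) :
    ∫ y in 0..ε, y ^ β * exp (-(r * y)) ≤ Gamma (β + 1) * r ^ (-(β + 1)) := by
  have key := integral_rpow_mul_exp_neg_mul_Ioi (a := β + 1) (by linarith) hr
  rw [add_sub_cancel_right] at key
  have hint : IntegrableOn (fun y => y ^ β * exp (-(r * y))) (Ioi 0) :=
    .of_integral_ne_zero <| by
      rw [key]; exact mul_ne_zero (by positivity) (Gamma_pos_of_pos (by linarith)).ne'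
  rw [intervalIntegral.integral_of_le hε]
  calc ∫ y in Ioc 0 ε, y ^ β * exp (-(r * y)) ≤ ∫ y in Ioi 0, y ^ β * exp (-(r * y)) := by
        refine setIntegral_mono_set hint ?_ Ioc_subset_Ioi_self.eventuallyLE
        filter_upwards [ae_restrict_mem measurableSet_Ioi] with y hy
        exact mul_nonneg (rpow_nonneg hy.le _) (exp_nonneg _)
    _ = Gamma (β + 1) * r ^ (-(β + 1)) := by
        rw [key, one_div, inv_rpow hr.le, rpow_neg hr.le, mul_comm]

lemma intervalIntegral_pow_mul_le_pow_mul {f : ℝ → ℝ} {a : ℝ} (hnn : ∀ x, 0 ≤ f x)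
    (ha : 0 ≤ a) (hfi : IntervalIntegrable f volume 0 a) (n : ℕ) :
    ∫ x in 0..a, x ^ n * f x ≤ a ^ n * ∫ x in 0..a, f x := by
  rw [← intervalIntegral.integral_const_mul]
  exact intervalIntegral.integral_mono_on ha (hfi.continuousOn_mul (by fun_prop))
    (hfi.const_mul _) fun x hx => mul_le_mul_of_nonneg_right (pow_le_pow_left₀ hx.1 hx.2 n) (hnn x)

lemma intervalIntegral_pow_mul_le_of_le_rpow {f : ℝ → ℝ} {B β ε : ℝ} {n : ℕ} (hβ : -1 < β)
    (hB : 0 ≤ B) (hε0 : 0 ≤ ε) (hε1 : ε ≤ 1) (hn : 0 < n)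
    (hfi : IntervalIntegrable (fun x => x ^ n * f x) volume (1 - ε) 1)
    (hbound : ∀ y ∈ Ioo 0 ε, f (1 - y) ≤ B * y ^ β) :
    ∫ x in (1 - ε)..1, x ^ n * f x ≤ B * Gamma (β + 1) * (n : ℝ) ^ (-(β + 1)) := by
  set g : ℝ → ℝ := fun y => y ^ β * exp (-(n * y))
  have hgi : IntervalIntegrable g volume 0 ε :=
    (intervalIntegral.intervalIntegrable_rpow' hβ).mul_continuousOn (by fun_prop)
  have hgi' : IntervalIntegrable (fun x => B * g (1 - x)) volume (1 - ε) 1 := by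
    simpa using ((hgi.comp_sub_left 1).symm).const_mul B
  calc ∫ x in (1 - ε)..1, x ^ n * f x ≤ ∫ x in (1 - ε)..1, B * g (1 - x) := by
        refine intervalIntegral.integral_mono_on_of_le_Ioo (by linarith) hfi hgi' fun x hx => ?_
        have hfx : f x ≤ B * (1 - x) ^ β := by
          simpa using hbound (1 - x) ⟨by linarith [hx.2], by linarith [hx.1]⟩
        have hx0 : 0 ≤ x := by linarith [hx.1]
        calc x ^ n * f x ≤ x ^ n * (B * (1 - x) ^ β) :=
              mul_le_mul_of_nonneg_left hfx (pow_nonneg hx0 n)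
          _ ≤ exp (-(n * (1 - x))) * (B * (1 - x) ^ β) :=
              mul_le_mul_of_nonneg_right (pow_le_exp_neg_mul_one_sub hx0 n)
                (mul_nonneg hB (rpow_nonneg (by linarith [hx.2]) _))
          _ = B * g (1 - x) := by ring
    _ = B * ∫ y in 0..ε, g y := by
        rw [intervalIntegral.integral_const_mul, intervalIntegral.integral_comp_sub_left]
        simp
    _ ≤ B * (Gamma (β + 1) * (n : ℝ) ^ (-(β + 1))) := by
        gcongr
        exact intervalIntegral_rpow_mul_exp_neg_mul_le hβ hε0 (Nat.cast_pos.mpr hn)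
    _ = B * Gamma (β + 1) * (n : ℝ) ^ (-(β + 1)) := by ring

lemma intervalIntegral_pow_mul_le_pow_add {f : ℝ → ℝ} {B β ε : ℝ} {n : ℕ}
    (hnn : ∀ x, 0 ≤ f x) (hfi : IntervalIntegrable f volume 0 1) (hf1 : ∫ x in 0..1, f x ≤ 1)
    (hβ : -1 < β) (hB : 0 ≤ B) (hε0 : 0 ≤ ε) (hε1 : ε ≤ 1) (hn : 0 < n)
    (hbound : ∀ y ∈ Ioo 0 ε, f (1 - y) ≤ B * y ^ β) :
    ∫ x in 0..1, x ^ n * f x ≤ (1 - ε) ^ n + B * Gamma (β + 1) * (n : ℝ) ^ (-(β + 1)) := by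
  have ha : 1 - ε ∈ uIcc (0 : ℝ) 1 := by rw [uIcc_of_le zero_le_one]; constructor <;> linarith
  have hmi : IntervalIntegrable (fun x => x ^ n * f x) volume 0 1 :=
    hfi.continuousOn_mul (by fun_prop)
  have hhead : ∫ x in 0..(1 - ε), x ^ n * f x ≤ (1 - ε) ^ n := by
    have hfa : ∫ x in 0..(1 - ε), f x ≤ 1 :=
      (intervalIntegral.integral_mono_interval le_rfl (by linarith) (by linarith)
        (Eventually.of_forall hnn) hfi).trans hf1
    calc ∫ x in 0..(1 - ε), x ^ n * f x ≤ (1 - ε) ^ n * ∫ x in 0..(1 - ε), f x :=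
          intervalIntegral_pow_mul_le_pow_mul hnn (by linarith) (hfi.mono_set (uIcc_subset_uIcc_left ha)) n
      _ ≤ (1 - ε) ^ n := mul_le_of_le_one_right (pow_nonneg (by linarith) n) hfa
  rw [← intervalIntegral.integral_add_adjacent_intervals (hmi.mono_set (uIcc_subset_uIcc_left ha))
    (hmi.mono_set (uIcc_subset_uIcc_right ha))]
  exact add_le_add hhead
    (intervalIntegral_pow_mul_le_of_le_rpow hβ hB hε0 hε1 hn (hmi.mono_set (uIcc_subset_uIcc_right ha)) hbound)

theorem moment_zeta_converges_general
    (f : ℝ → ℝ) (hnn : ∀ x, 0 ≤ f x)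
    (hprob : ∫ x in (0 : ℝ)..1, f x = 1)
    (c β δ : ℝ) (hβ : -1 < β) (hδ : 0 < δ)
    (hasymp : Asymptotics.IsBigO (nhdsWithin 0 (Set.Ioi (0 : ℝ)))
      (fun x => f (1 - x) - c * x ^ β) (fun x => x ^ (β + δ))) :
    ∀ s : ℝ, 1 / (1 + β) < s →
      Summable (fun k : ℕ => (∫ x in (0 : ℝ)..1, x ^ (k + 1) * f x) ^ s) := by
  intro s hs
  have hβ1 : 0 < 1 + β := by linarith
  have hs0 : 0 < s := lt_trans (by positivity) hs
  have hps : 1 < (β + 1) * s := by rw [div_lt_iff₀ hβ1] at hs; linarith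
  have hfi : IntervalIntegrable f volume 0 1 := by
    by_contra h
    rw [intervalIntegral.integral_undef h] at hprob
    exact zero_ne_one hprob
  obtain ⟨B, ε, hB, hε0, hε1, hbound⟩ :=
    exists_le_mul_rpow_of_isBigO (isBigO_rpow_of_sub_isBigO hδ.le hasymp)
  have hD : 0 ≤ B * Gamma (β + 1) := mul_nonneg hB (Gamma_nonneg_of_nonneg (by linarith))
  refine summable_rpow_of_le_add hs0.le
    (fun k => intervalIntegral.integral_nonneg zero_le_one fun x hx =>
      mul_nonneg (pow_nonneg hx.1 _) (hnn x))
    (fun k => pow_nonneg (by linarith) _)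
    (fun k => mul_nonneg hD (rpow_nonneg (Nat.cast_nonneg _) _))
    (fun k => intervalIntegral_pow_mul_le_pow_add hnn hfi hprob.le hβ hB hε0.le hε1
      k.succ_pos hbound) ?_ ?_
  · exact (summable_nat_add_iff 1).mpr (summable_pow_rpow (by linarith) (by linarith) hs0)
  · exact (summable_nat_add_iff 1).mpr (summable_mul_natCast_rpow_neg_rpow hD hps)

/-- If `F` is a Borel probability measure on `[0,1]` with density `f` satisfying
`f(1−x) = c x^β + O(x^{β+δ})` as `x → 0⁺` (with `c > 0`, `β > −1`, `δ > 0`), then the moment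
zeta function `ζ_F(s) = ∑_{k=1}^∞ m_k(F)^s` converges for every real `s > 1/(1+β)`. -/
theorem moment_zeta_converges
    (f : ℝ → ℝ) (hmf : Measurable f) (hnn : ∀ x, 0 ≤ f x)
    (hsupp : ∀ x, x ∉ Set.Icc (0 : ℝ) 1 → f x = 0)
    (hprob : ∫ x in (0 : ℝ)..1, f x = 1)
    (c β δ : ℝ) (hc : 0 < c) (hβ : -1 < β) (hδ : 0 < δ)
    (hasymp : Asymptotics.IsBigO (nhdsWithin 0 (Set.Ioi (0 : ℝ)))
      (fun x => f (1 - x) - c * x ^ β) (fun x => x ^ (β + δ))) :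
    ∀ s : ℝ, 1 / (1 + β) < s →
      Summable (fun k : ℕ => (∫ x in (0 : ℝ)..1, x ^ (k + 1) * f x) ^ s) :=
  moment_zeta_converges_general f hnn hprob c β δ hβ hδ hasymp
end

section
/- Let F be a Borel probability measure on [0,1] whose moments m_k(F) = ∫₀¹ x^k dF(x) satisfy ∑_{k=1}^∞ m_k(F) < ∞, and let p_1, …, p_n be independent random variables each with distribution F. Then the random variable T = ∑_{k=1}^∞ (1 − ∏_{i=1}^n (1 − p_i^k)) is integrable and E[T] = ∑_{k=1}^n (n choose k) (−1)^{k−1} ζ_F(k), where ζ_F(k) = ∑_{j=1}^∞ m_j(F)^k. -/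
/-!
By independence, the expected value of the `k`-th summand `1 - ∏ i, (1 - p i ^ k)` is
`1 - (1 - m_k)^n`, which the binomial theorem expands as `∑ s ∈ [1, n], C(n,s) (-1)^(s-1) m_k^s`.
Since `0 ≤ m_k ≤ 1`, each series `∑ₖ m_k^s` is dominated by `∑ₖ m_k < ∞`; and since the
summands are nonnegative, summability of their expectations makes `T` integrable and lets
expectation and summation be interchanged.
-/

open MeasureTheory ProbabilityTheory Finset

theorem one_sub_one_sub_pow {R : Type*} [CommRing R] (x : R) (n : ℕ) :
    1 - (1 - x) ^ n = ∑ k ∈ Icc 1 n, (n.choose k : R) * (-1) ^ (k - 1) * x ^ k := by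
  rw [sub_eq_neg_add 1 x, add_pow, range_eq_Ico, sum_eq_sum_Ico_succ_bot (Nat.succ_pos n),
    zero_add, Nat.succ_eq_add_one, Ico_add_one_right_eq_Icc, ← sub_sub, sub_eq_neg_add,
    ← sum_neg_distrib]
  simp only [pow_zero, Nat.choose_zero_right, Nat.cast_one, one_pow, mul_one, sub_self, add_zero]
  refine sum_congr rfl fun k hk ↦ ?_
  obtain ⟨j, rfl⟩ := Nat.exists_eq_add_of_le' (mem_Icc.1 hk).1
  rw [neg_pow, Nat.add_sub_cancel, pow_succ]
  ring

theorem hasSum_one_sub_one_sub_pow {m : ℕ → ℝ} (hm : ∀ k, m k ∈ Set.Icc 0 1) (hsum : Summable m)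
    (n : ℕ) :
    HasSum (fun k ↦ 1 - (1 - m k) ^ n)
      (∑ s ∈ Icc 1 n, (n.choose s : ℝ) * (-1) ^ (s - 1) * ∑' k, m k ^ s) := by
  simp_rw [one_sub_one_sub_pow]
  refine hasSum_sum fun s hs ↦ (Summable.hasSum ?_).mul_left _
  exact hsum.of_nonneg_of_le (fun k ↦ pow_nonneg (hm k).1 s)
    fun k ↦ pow_le_of_le_one (hm k).1 (hm k).2 (by grind)

theorem prod_one_sub_pow_mem_Icc {ι : Type*} (s : Finset ι) {x : ι → ℝ}
    (hx : ∀ i ∈ s, x i ∈ Set.Icc 0 1) (k : ℕ) :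
    ∏ i ∈ s, (1 - x i ^ k) ∈ Set.Icc 0 1 :=
  unitInterval.prod_mem fun i hi ↦
    Set.Icc.mem_iff_one_sub_mem.1 <| pow_mem (S := unitInterval.submonoid) (hx i hi) k

section Series

variable {α E : Type*} [MeasurableSpace α] {μ : Measure α} [NormedAddCommGroup E]

theorem integrable_tsum_of_summable_integral_norm [CompleteSpace E] {F : ℕ → α → E}
    (hF_int : ∀ i, Integrable (F i) μ) (hF_sum : Summable fun i ↦ ∫ a, ‖F i a‖ ∂μ) :
    Integrable (fun a ↦ ∑' i, F i a) μ := by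
  have hlint : ∫⁻ a, ∑' i, ‖F i a‖ₑ ∂μ ≠ ⊤ := by
    rw [lintegral_tsum fun i ↦ (hF_int i).1.enorm,
      ← funext fun i ↦ ofReal_integral_norm_eq_lintegral_enorm (hF_int i),
      ← ENNReal.ofReal_tsum_of_nonneg (fun i ↦ integral_nonneg fun a ↦ norm_nonneg _) hF_sum]
    exact ENNReal.ofReal_ne_top
  have hsummable : ∀ᵐ a ∂μ, Summable fun i ↦ F i a := by
    filter_upwards [ae_lt_top' (AEMeasurable.tsum fun i ↦ (hF_int i).1.enorm) hlint]
      with a ha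
    simp_rw [enorm_eq_nnnorm] at ha
    exact .of_norm <| NNReal.summable_coe.2 (ENNReal.tsum_coe_ne_top_iff_summable.1 ha.ne)
  refine ⟨aestronglyMeasurable_of_tendsto_ae Filter.atTop
    (fun N ↦ Finset.aestronglyMeasurable_fun_sum (range N) fun i _ ↦ (hF_int i).1)
    (hsummable.mono fun a ha ↦ ha.hasSum.tendsto_sum_nat), ?_⟩
  exact (lintegral_mono fun a ↦ enorm_tsum_le_tsum_enorm).trans_lt hlint.lt_top

theorem integrable_tsum_and_integral_tsum_eq_of_nonneg {F : ℕ → α → ℝ} {I : ℝ}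
    (hF_int : ∀ i, Integrable (F i) μ) (hF_nonneg : ∀ i, 0 ≤ᵐ[μ] F i)
    (hF_sum : HasSum (fun i ↦ ∫ a, F i a ∂μ) I) :
    Integrable (fun a ↦ ∑' i, F i a) μ ∧ ∫ a, ∑' i, F i a ∂μ = I := by
  have h_norm : ∀ i, ∫ a, ‖F i a‖ ∂μ = ∫ a, F i a ∂μ := fun i ↦
    integral_congr_ae <| (hF_nonneg i).mono fun a ha ↦ Real.norm_of_nonneg ha
  have h_sum_norm : Summable fun i ↦ ∫ a, ‖F i a‖ ∂μ := by
    simpa only [h_norm] using hF_sum.summable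
  exact ⟨integrable_tsum_of_summable_integral_norm hF_int h_sum_norm,
    (integral_tsum_of_summable_integral_norm hF_int h_sum_norm).symm.trans hF_sum.tsum_eq⟩

end Series

theorem ProbabilityTheory.iIndepFun.integral_prod_one_sub {Ω ι : Type*} [MeasurableSpace Ω]
    {P : Measure Ω} [Fintype ι] {X : ι → Ω → ℝ} (hX : iIndepFun X P)
    (hint : ∀ i, Integrable (X i) P) :
    ∫ ω, ∏ i, (1 - X i ω) ∂P = ∏ i, (1 - ∫ ω, X i ω ∂P) := by
  have := hX.isProbabilityMeasure
  rw [hX.integral_fun_prod_comp (f := fun _ x ↦ 1 - x) (fun i ↦ (hint i).1.aemeasurable)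
    fun i ↦ by fun_prop]
  refine prod_congr rfl fun i _ ↦ ?_
  rw [integral_sub (integrable_const 1) (hint i), integral_const, probReal_univ, one_smul]

theorem integral_pow_mem_Icc {μ : Measure ℝ} [IsProbabilityMeasure μ]
    (hμ : ∀ᵐ t ∂μ, t ∈ Set.Icc 0 1) (k : ℕ) : ∫ t, t ^ k ∂μ ∈ Set.Icc 0 1 := by
  have h01 : ∀ᵐ t ∂μ, t ^ k ∈ Set.Icc (0 : ℝ) 1 :=
    hμ.mono fun t ht ↦ pow_mem (S := unitInterval.submonoid) ht k
  refine ⟨integral_nonneg_of_ae (h01.mono fun t ht ↦ ht.1), ?_⟩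
  calc ∫ t, t ^ k ∂μ ≤ ∫ _, (1 : ℝ) ∂μ :=
        integral_mono_ae (.of_mem_Icc 0 1 (by fun_prop) h01) (integrable_const 1)
          (h01.mono fun t ht ↦ ht.2)
    _ = 1 := by simp

theorem integral_one_sub_prod_one_sub_pow {Ω ι : Type*} [MeasurableSpace Ω] {P : Measure Ω}
    [Fintype ι] {p : ι → Ω → ℝ} {μ : Measure ℝ} (hmeas : ∀ i, Measurable (p i))
    (hindep : iIndepFun p P) (hdist : ∀ i, P.map (p i) = μ)
    (hp : ∀ i, ∀ᵐ ω ∂P, p i ω ∈ Set.Icc 0 1) (k : ℕ) :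
    ∫ ω, (1 - ∏ i, (1 - p i ω ^ k)) ∂P = 1 - (1 - ∫ t, t ^ k ∂μ) ^ Fintype.card ι := by
  have := hindep.isProbabilityMeasure
  have hpow_int : ∀ i, Integrable (fun ω ↦ p i ω ^ k) P := fun i ↦
    .of_mem_Icc 0 1 (by fun_prop) <| (hp i).mono fun ω hω ↦
      pow_mem (S := unitInterval.submonoid) hω k
  have hmoment : ∀ i, ∫ ω, p i ω ^ k ∂P = ∫ t, t ^ k ∂μ := fun i ↦ by
    rw [← hdist i, integral_map (hmeas i).aemeasurable (by fun_prop)]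
  have hprod := (hindep.comp (fun _ t ↦ t ^ k) fun _ ↦ by fun_prop).integral_prod_one_sub hpow_int
  have hprod_mem : ∀ᵐ ω ∂P, ∏ i, (1 - p i ω ^ k) ∈ Set.Icc (0 : ℝ) 1 :=
    (ae_all_iff.2 hp).mono fun ω hω ↦ prod_one_sub_pow_mem_Icc univ (fun i _ ↦ hω i) k
  rw [integral_sub (integrable_const 1) (.of_mem_Icc 0 1 (by fun_prop) hprod_mem)]
  simp only [Function.comp_apply] at hprod
  simp [hprod, hmoment]

theorem batch_learner_expected_time_moment_zeta_general
    (μ : Measure ℝ) [IsProbabilityMeasure μ]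
    (hsupp : μ (Set.Icc (0 : ℝ) 1)ᶜ = 0)
    (hsum : Summable (fun j : ℕ => ∫ t, t ^ (j + 1) ∂μ))
    (n : ℕ)
    {Ω : Type*} [MeasureSpace Ω]
    (p : Fin n → Ω → ℝ) (hmeas : ∀ i, Measurable (p i))
    (hindep : iIndepFun p ℙ)
    (hdist : ∀ i, Measure.map (p i) ℙ = μ) :
    Integrable (fun ω => ∑' k : ℕ, (1 - ∏ i, (1 - p i ω ^ (k + 1)))) ℙ ∧
    (∫ ω, (∑' k : ℕ, (1 - ∏ i, (1 - p i ω ^ (k + 1)))) ∂ℙ) =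
      ∑ k ∈ Finset.Icc 1 n,
        (n.choose k : ℝ) * (-1 : ℝ) ^ (k - 1) * ∑' j : ℕ, (∫ t, t ^ (j + 1) ∂μ) ^ k := by
  have := hindep.isProbabilityMeasure
  have hμ : ∀ᵐ t ∂μ, t ∈ Set.Icc (0 : ℝ) 1 := ae_iff.2 hsupp
  have hp : ∀ i, ∀ᵐ ω ∂ℙ, p i ω ∈ Set.Icc 0 1 := fun i ↦
    ae_of_ae_map (hmeas i).aemeasurable (hdist i ▸ hμ)
  have hT_mem : ∀ k : ℕ, ∀ᵐ ω ∂ℙ, 1 - ∏ i, (1 - p i ω ^ (k + 1)) ∈ Set.Icc (0 : ℝ) 1 :=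
    fun k ↦ (ae_all_iff.2 hp).mono fun ω hω ↦
      Set.Icc.mem_iff_one_sub_mem.1 (prod_one_sub_pow_mem_Icc univ (fun i _ ↦ hω i) (k + 1))
  have hT_integral : ∀ k : ℕ, ∫ ω, (1 - ∏ i, (1 - p i ω ^ (k + 1))) ∂ℙ =
      1 - (1 - ∫ t, t ^ (k + 1) ∂μ) ^ n := fun k ↦ by
    rw [integral_one_sub_prod_one_sub_pow hmeas hindep hdist hp, Fintype.card_fin]
  refine integrable_tsum_and_integral_tsum_eq_of_nonneg
    (fun k ↦ .of_mem_Icc 0 1 (by fun_prop) (hT_mem k)) (fun k ↦ (hT_mem k).mono fun _ h ↦ h.1) ?_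
  simpa only [hT_integral] using
    hasSum_one_sub_one_sub_pow (fun k ↦ integral_pow_mem_Icc hμ (k + 1)) hsum n

/-- Let `F` be a Borel probability measure on `[0,1]` whose moments
`m_j = ∫ t^j dF(t)` satisfy `∑_{j=1}^∞ m_j < ∞`, and let `p_1, …, p_n` be i.i.d. with
distribution `F`.  Then `T = ∑_{k=1}^∞ (1 − ∏_i (1 − p_i^k))` is integrable and
`E[T] = ∑_{k=1}^n C(n,k) (−1)^{k−1} ζ_F(k)`, with `ζ_F(k) = ∑_{j=1}^∞ m_j^k`. -/
theorem batch_learner_expected_time_moment_zeta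
    (μ : Measure ℝ) [IsProbabilityMeasure μ]
    (hsupp : μ (Set.Icc (0 : ℝ) 1)ᶜ = 0)
    (hsum : Summable (fun j : ℕ => ∫ t, t ^ (j + 1) ∂μ))
    (n : ℕ) (hn : 1 ≤ n)
    {Ω : Type*} [MeasureSpace Ω] [IsProbabilityMeasure (ℙ : Measure Ω)]
    (p : Fin n → Ω → ℝ) (hmeas : ∀ i, Measurable (p i))
    (hindep : iIndepFun p ℙ)
    (hdist : ∀ i, Measure.map (p i) ℙ = μ) :
    Integrable (fun ω => ∑' k : ℕ, (1 - ∏ i, (1 - p i ω ^ (k + 1)))) ℙ ∧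
    (∫ ω, (∑' k : ℕ, (1 - ∏ i, (1 - p i ω ^ (k + 1)))) ∂ℙ) =
      ∑ k ∈ Finset.Icc 1 n,
        (n.choose k : ℝ) * (-1 : ℝ) ^ (k - 1) * ∑' j : ℕ, (∫ t, t ^ (j + 1) ∂μ) ^ k :=
  batch_learner_expected_time_moment_zeta_general μ hsupp hsum n p hmeas hindep hdist
end

section
/- Let F be a Borel probability measure on [0,1] whose moments m_j(F) = ∫₀¹ x^j dF(x) satisfy ∑_{j=1}^∞ m_j(F) < ∞, and let n ≥ 1. Then ∑_{k=1}^n (n choose k) (−1)^{k−1} ζ_F(k) = ∑_{j=1}^∞ [1 − (1 − m_j(F))^n], where ζ_F(k) = ∑_{j=1}^∞ m_j(F)^k and both series converge absolutely. -/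
/-!
Expanding `1 - (1 - x) ^ n` by the binomial theorem gives, for every moment `x = m_j`,
`∑_{k=1}^n C(n,k) (-1)^(k-1) m_j ^ k = 1 - (1 - m_j) ^ n`. Summing over `j` and exchanging the
finite sum over `k` with the series over `j` gives the identity. All series converge absolutely
because the moments lie in `[0, 1]`, so that `m_j ^ k ≤ m_j` and, by Bernoulli's inequality,
`0 ≤ 1 - (1 - m_j) ^ n ≤ n m_j`.
-/

open MeasureTheory Finset

theorem sum_Icc_choose_mul_neg_one_pow_mul_pow {R : Type*} [CommRing R] (x : R) (n : ℕ) :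
    ∑ k ∈ Icc 1 n, (n.choose k : R) * (-1) ^ (k - 1) * x ^ k = 1 - (1 - x) ^ n := by
  have binomial := add_pow (-x) 1 n
  rw [sum_range_eq_add_Ico _ (by omega : 0 < n + 1), Ico_add_one_right_eq_Icc] at binomial
  simp only [pow_zero, one_pow, mul_one, Nat.choose_zero_right, Nat.cast_one] at binomial
  have term : ∀ k ∈ Icc 1 n,
      (n.choose k : R) * (-1) ^ (k - 1) * x ^ k = -((-x) ^ k * n.choose k) := by
    intro k hk
    obtain ⟨j, rfl⟩ := Nat.exists_eq_add_of_le' (mem_Icc.1 hk).1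
    simp only [neg_pow x, Nat.add_sub_cancel, pow_succ]
    ring
  rw [sum_congr rfl term, sum_neg_distrib]
  linear_combination binomial

theorem integral_mem_Icc_zero_one {α : Type*} [MeasurableSpace α] {μ : Measure α}
    [IsProbabilityMeasure μ] {f : α → ℝ} (hf : ∀ᵐ a ∂μ, f a ∈ Set.Icc 0 1) :
    ∫ a, f a ∂μ ∈ Set.Icc 0 1 := by
  constructor
  · exact integral_nonneg_of_ae (hf.mono fun _ h => h.1)
  · calc ∫ a, f a ∂μ ≤ ∫ _, (1 : ℝ) ∂μ :=
          integral_mono_of_nonneg (hf.mono fun _ h => h.1) (integrable_const 1)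
            (hf.mono fun _ h => h.2)
      _ = 1 := by simp

section UnitIntervalSequence

variable {ι : Type*} {m : ι → ℝ}

theorem summable_abs_pow_of_mem_Icc (hm : ∀ j, m j ∈ Set.Icc 0 1) (hsum : Summable m)
    {k : ℕ} (hk : 1 ≤ k) : Summable fun j => |m j ^ k| := by
  refine hsum.of_nonneg_of_le (fun _ => abs_nonneg _) fun j => ?_
  obtain ⟨h0, h1⟩ := hm j
  rw [abs_of_nonneg (pow_nonneg h0 k)]
  simpa using pow_le_pow_of_le_one h0 h1 hk

theorem summable_abs_one_sub_one_sub_pow (hm : ∀ j, m j ∈ Set.Icc 0 1) (hsum : Summable m)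
    (n : ℕ) : Summable fun j => |1 - (1 - m j) ^ n| := by
  refine (hsum.mul_left (n : ℝ)).of_nonneg_of_le (fun _ => abs_nonneg _) fun j => ?_
  obtain ⟨h0, h1⟩ := hm j
  have upper : (1 - m j) ^ n ≤ 1 := pow_le_one₀ (by linarith) (by linarith)
  have bernoulli : 1 + n * -m j ≤ (1 - m j) ^ n := by
    simpa [sub_eq_add_neg] using one_add_mul_le_pow (a := -m j) (by linarith) n
  rw [abs_of_nonneg (by linarith)]
  linarith

theorem sum_Icc_choose_mul_tsum_pow {n : ℕ} (hm : ∀ k ∈ Icc 1 n, Summable fun j => m j ^ k) :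
    ∑ k ∈ Icc 1 n, (n.choose k : ℝ) * (-1) ^ (k - 1) * ∑' j, m j ^ k =
      ∑' j, (1 - (1 - m j) ^ n) := by
  calc ∑ k ∈ Icc 1 n, (n.choose k : ℝ) * (-1) ^ (k - 1) * ∑' j, m j ^ k
      = ∑ k ∈ Icc 1 n, ∑' j, (n.choose k : ℝ) * (-1) ^ (k - 1) * m j ^ k :=
        sum_congr rfl fun k hk => ((hm k hk).tsum_mul_left _).symm
    _ = ∑' j, ∑ k ∈ Icc 1 n, (n.choose k : ℝ) * (-1) ^ (k - 1) * m j ^ k :=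
        (Summable.tsum_finsetSum fun k hk => (hm k hk).mul_left _).symm
    _ = ∑' j, (1 - (1 - m j) ^ n) :=
        tsum_congr fun j => sum_Icc_choose_mul_neg_one_pow_mul_pow (m j) n

end UnitIntervalSequence

theorem moment_zeta_binomial_identity_general
    (μ : Measure ℝ) [IsProbabilityMeasure μ]
    (hsupp : μ (Set.Icc (0 : ℝ) 1)ᶜ = 0)
    (hsum : Summable (fun j : ℕ => ∫ t, t ^ (j + 1) ∂μ))
    (n : ℕ) :
    (∀ k : ℕ, 1 ≤ k → k ≤ n → Summable (fun j : ℕ => |(∫ t, t ^ (j + 1) ∂μ) ^ k|)) ∧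
    Summable (fun j : ℕ => |1 - (1 - ∫ t, t ^ (j + 1) ∂μ) ^ n|) ∧
    (∑ k ∈ Finset.Icc 1 n,
        (n.choose k : ℝ) * (-1 : ℝ) ^ (k - 1) * ∑' j : ℕ, (∫ t, t ^ (j + 1) ∂μ) ^ k) =
      ∑' j : ℕ, (1 - (1 - ∫ t, t ^ (j + 1) ∂μ) ^ n) := by
  have hae : ∀ᵐ t ∂μ, t ∈ Set.Icc (0 : ℝ) 1 := mem_ae_iff.2 hsupp
  have moment_mem : ∀ j : ℕ, ∫ t, t ^ (j + 1) ∂μ ∈ Set.Icc 0 1 := fun j =>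
    integral_mem_Icc_zero_one <| hae.mono fun t ht =>
      ⟨pow_nonneg ht.1 _, pow_le_one₀ ht.1 ht.2⟩
  have pow_summable : ∀ k, 1 ≤ k → Summable fun j : ℕ => |(∫ t, t ^ (j + 1) ∂μ) ^ k| :=
    fun k hk => summable_abs_pow_of_mem_Icc moment_mem hsum hk
  exact ⟨fun k hk _ => pow_summable k hk,
    summable_abs_one_sub_one_sub_pow moment_mem hsum n,
    sum_Icc_choose_mul_tsum_pow fun k hk => (pow_summable k (mem_Icc.1 hk).1).of_abs⟩

/-- Let `F` be a Borel probability measure on `[0,1]` whose moments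
`m_j = ∫ t^j dF(t)` satisfy `∑_{j=1}^∞ m_j < ∞`, and let `n ≥ 1`.  Then
`∑_{k=1}^n C(n,k)(−1)^{k−1} ζ_F(k) = ∑_{j=1}^∞ [1 − (1 − m_j)^n]`, where
`ζ_F(k) = ∑_{j=1}^∞ m_j^k` and both series converge absolutely. -/
theorem moment_zeta_binomial_identity
    (μ : Measure ℝ) [IsProbabilityMeasure μ]
    (hsupp : μ (Set.Icc (0 : ℝ) 1)ᶜ = 0)
    (hsum : Summable (fun j : ℕ => ∫ t, t ^ (j + 1) ∂μ))
    (n : ℕ) (hn : 1 ≤ n) :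
    (∀ k : ℕ, 1 ≤ k → k ≤ n → Summable (fun j : ℕ => |(∫ t, t ^ (j + 1) ∂μ) ^ k|)) ∧
    Summable (fun j : ℕ => |1 - (1 - ∫ t, t ^ (j + 1) ∂μ) ^ n|) ∧
    (∑ k ∈ Finset.Icc 1 n,
        (n.choose k : ℝ) * (-1 : ℝ) ^ (k - 1) * ∑' j : ℕ, (∫ t, t ^ (j + 1) ∂μ) ^ k) =
      ∑' j : ℕ, (1 - (1 - ∫ t, t ^ (j + 1) ∂μ) ^ n) :=
  moment_zeta_binomial_identity_general μ hsupp hsum n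
end

section
/- Let F be a Borel probability measure on [0,1] with continuous density f with respect to Lebesgue measure, and suppose lim_{x→1⁻} f(x) = c for some c > 0. Then ζ_F(k) = ∑_{j=1}^∞ m_j(F)^k converges for every integer k ≥ 2, and ∑_{k=2}^n (n choose k) (−1)^k ζ_F(k) ∼ c n log n as n → ∞. -/
/-!
Write `m j = ∫₀¹ x^(j+1) f`. The kernels `(n+1) xⁿ` concentrate at `1`, so `(j+1) m j → c`.
By the binomial theorem the alternating sum equals `∑ⱼ ((1 - m j)ⁿ - 1 + n m j)`. For `j < n`
each term is `n m j + O(1)`, and `n ∑_{j<n} m j ∼ c n log n` by comparison with the harmonic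
numbers; for `j ≥ n` the terms are at most `n² (m j)² / 2 = O(n² / j²)`, so their sum is `O(n)`.
-/

open Filter Finset Real Topology Asymptotics MeasureTheory intervalIntegral

theorem add_one_mul_integral_pow_mul_le {g : ℝ → ℝ} {t ε : ℝ}
    (hg : IntervalIntegrable g volume 0 1) (hg0 : ∀ x, 0 ≤ g x) (ht0 : 0 ≤ t) (ht1 : t ≤ 1)
    (hε0 : 0 ≤ ε) (hε : ∀ x ∈ Set.Ioo t 1, g x ≤ ε) (n : ℕ) :
    ((n : ℝ) + 1) * ∫ x in (0 : ℝ)..1, x ^ n * g x ≤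
      ((n : ℝ) + 1) * t ^ n * (∫ x in (0 : ℝ)..1, g x) + ε := by
  have ht : t ∈ Set.uIcc (0 : ℝ) 1 := Set.mem_uIcc_of_le ht0 ht1
  have hi : IntervalIntegrable (fun x => x ^ n * g x) volume 0 1 :=
    hg.continuousOn_mul (continuous_pow n).continuousOn
  have hi0t := hi.mono_set (Set.uIcc_subset_uIcc_left ht)
  have hit1 := hi.mono_set (Set.uIcc_subset_uIcc_right ht)
  have hhead : ∫ x in (0 : ℝ)..t, x ^ n * g x ≤ t ^ n * ∫ x in (0 : ℝ)..1, g x := calc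
    ∫ x in (0 : ℝ)..t, x ^ n * g x ≤ ∫ x in (0 : ℝ)..t, t ^ n * g x :=
      integral_mono_on ht0 hi0t ((hg.mono_set (Set.uIcc_subset_uIcc_left ht)).const_mul _)
        fun x hx => mul_le_mul_of_nonneg_right (pow_le_pow_left₀ hx.1 hx.2 n) (hg0 x)
    _ ≤ t ^ n * ∫ x in (0 : ℝ)..1, g x := by
      rw [intervalIntegral.integral_const_mul]
      exact mul_le_mul_of_nonneg_left (integral_mono_interval le_rfl ht0 ht1
        (Eventually.of_forall hg0) hg) (pow_nonneg ht0 n)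
  have htail : ∫ x in t..1, x ^ n * g x ≤ ε / ((n : ℝ) + 1) := calc
    ∫ x in t..1, x ^ n * g x ≤ ∫ x in t..1, ε * x ^ n :=
      integral_mono_on_of_le_Ioo ht1 hit1 ((intervalIntegrable_pow n).const_mul ε)
        fun x hx => by
          rw [mul_comm ε]
          exact mul_le_mul_of_nonneg_left (hε x hx) (pow_nonneg (ht0.trans hx.1.le) n)
    _ ≤ ∫ x in (0 : ℝ)..1, ε * x ^ n :=
      integral_mono_interval ht0 ht1 le_rfl (ae_restrict_of_forall_mem measurableSet_Ioc
        fun x hx => mul_nonneg hε0 (pow_nonneg hx.1.le n)) ((intervalIntegrable_pow n).const_mul ε)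
    _ = ε / ((n : ℝ) + 1) := by simp [integral_pow, div_eq_mul_inv]
  rw [← integral_add_adjacent_intervals hi0t hit1]
  have hn : (0 : ℝ) < n + 1 := by positivity
  calc ((n : ℝ) + 1) * ((∫ x in (0 : ℝ)..t, x ^ n * g x) + ∫ x in t..1, x ^ n * g x)
      ≤ ((n : ℝ) + 1) * (t ^ n * (∫ x in (0 : ℝ)..1, g x) + ε / ((n : ℝ) + 1)) :=
        mul_le_mul_of_nonneg_left (add_le_add hhead htail) hn.le
    _ = ((n : ℝ) + 1) * t ^ n * (∫ x in (0 : ℝ)..1, g x) + ε := by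
        rw [mul_add, mul_div_cancel₀ _ hn.ne', mul_assoc]

theorem abs_add_one_mul_integral_pow_mul_sub_le {f : ℝ → ℝ}
    (hf : IntervalIntegrable f volume 0 1) (c : ℝ) (n : ℕ) :
    |((n : ℝ) + 1) * (∫ x in (0 : ℝ)..1, x ^ n * f x) - c| ≤
      ((n : ℝ) + 1) * ∫ x in (0 : ℝ)..1, x ^ n * |f x - c| := by
  have hn : (0 : ℝ) < n + 1 := by positivity
  have hc : ((n : ℝ) + 1) * ∫ x in (0 : ℝ)..1, x ^ n * c = c := by
    simp [integral_pow, hn.ne']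
  have hfi : IntervalIntegrable (fun x => x ^ n * f x) volume 0 1 :=
    hf.continuousOn_mul (continuous_pow n).continuousOn
  conv_lhs => rw [← hc, ← mul_sub, ← integral_sub hfi ((intervalIntegrable_pow n).mul_const c),
    abs_mul, abs_of_pos hn]
  refine mul_le_mul_of_nonneg_left ((abs_integral_le_integral_abs zero_le_one).trans_eq
    (integral_congr fun x hx => ?_)) hn.le
  rw [Set.uIcc_of_le zero_le_one] at hx
  simp only [← mul_sub, abs_mul, abs_pow, abs_of_nonneg hx.1]

theorem tendsto_add_one_mul_integral_pow_mul {f : ℝ → ℝ} {c : ℝ}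
    (hf : IntervalIntegrable f volume 0 1) (hlim : Tendsto f (𝓝[<] 1) (𝓝 c)) :
    Tendsto (fun n : ℕ => ((n : ℝ) + 1) * ∫ x in (0 : ℝ)..1, x ^ n * f x) atTop (𝓝 c) := by
  have hg : IntervalIntegrable (fun x => |f x - c|) volume 0 1 :=
    (hf.sub intervalIntegrable_const).abs
  rw [Metric.tendsto_atTop]
  intro ε hε
  obtain ⟨t, ⟨ht0, ht1⟩, hsmall⟩ := (mem_nhdsLT_iff_exists_mem_Ico_Ioo_subset zero_lt_one).1
    (hlim (Metric.closedBall_mem_nhds c (half_pos hε)))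
  have hdecay : Tendsto (fun n : ℕ => ((n : ℝ) + 1) * t ^ n * ∫ x in (0 : ℝ)..1, |f x - c|)
      atTop (𝓝 0) := by
    simpa [add_mul] using ((tendsto_self_mul_const_pow_of_lt_one ht0 ht1).add
      (tendsto_pow_atTop_nhds_zero_of_lt_one ht0 ht1)).mul_const (∫ x in (0 : ℝ)..1, |f x - c|)
  obtain ⟨N, hN⟩ := eventually_atTop.1 (hdecay.eventually (gt_mem_nhds (half_pos hε)))
  refine ⟨N, fun n hn => ?_⟩
  calc dist (((n : ℝ) + 1) * ∫ x in (0 : ℝ)..1, x ^ n * f x) c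
      ≤ ((n : ℝ) + 1) * ∫ x in (0 : ℝ)..1, x ^ n * |f x - c| :=
        abs_add_one_mul_integral_pow_mul_sub_le hf c n
    _ ≤ ((n : ℝ) + 1) * t ^ n * (∫ x in (0 : ℝ)..1, |f x - c|) + ε / 2 :=
      add_one_mul_integral_pow_mul_le hg (fun x => abs_nonneg _) ht0 ht1.le (half_pos hε).le
        (fun x hx => by simpa [Real.dist_eq] using hsmall hx) n
    _ < ε := by linarith [hN n hn]

theorem sum_Icc_two_choose_mul_neg_one_pow_mul_pow (n : ℕ) (x : ℝ) :
    ∑ k ∈ Icc 2 n, (n.choose k : ℝ) * (-1) ^ k * x ^ k = (1 - x) ^ n - 1 + n * x := by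
  rcases n with _ | n
  · simp
  have hexp : (1 - x) ^ (n + 1) =
      ∑ k ∈ Ico 0 (n + 1 + 1), ((n + 1).choose k : ℝ) * (-1) ^ k * x ^ k := by
    rw [sub_eq_neg_add, add_pow, ← range_eq_Ico]
    refine sum_congr rfl fun k _ => ?_
    rw [neg_pow]
    ring
  rw [hexp, sum_eq_sum_Ico_succ_bot (by omega), sum_eq_sum_Ico_succ_bot (by omega),
    ← Ico_add_one_right_eq_Icc]
  simp only [Nat.choose_zero_right, Nat.cast_one, pow_zero, mul_one, zero_add,
    Nat.choose_one_right, Nat.cast_add, pow_one, mul_neg, neg_add_rev, Nat.reduceAdd,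
    add_sub_cancel_left]
  ring

theorem one_sub_pow_sub_one_add_mul_nonneg {x : ℝ} (hx : x ≤ 2) (n : ℕ) :
    0 ≤ (1 - x) ^ n - 1 + n * x := by
  have := one_add_mul_le_pow (a := -x) (by linarith) n
  rw [← sub_eq_add_neg] at this
  linarith

theorem one_sub_pow_sub_one_add_mul_le_sq {x : ℝ} (hx0 : 0 ≤ x) (hx1 : x ≤ 1) (n : ℕ) :
    (1 - x) ^ n - 1 + n * x ≤ n ^ 2 / 2 * x ^ 2 := by
  induction n with
  | zero => simp
  | succ n ih =>
    have h1x : 0 ≤ 1 - x := by linarith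
    have := mul_le_mul_of_nonneg_right ih h1x
    rw [pow_succ]
    push_cast
    nlinarith [mul_nonneg (sq_nonneg (n : ℝ)) (pow_nonneg hx0 3), sq_nonneg x]

theorem tsum_inv_nat_add_sq_le (n : ℕ) :
    ∑' j : ℕ, ((j + (n + 1) : ℕ) ^ 2 : ℝ)⁻¹ ≤ 2 / (n + 1) := by
  refine tsum_le_of_sum_range_le (fun j => by positivity) fun N => ?_
  rw [range_eq_Ico, sum_Ico_add' (fun i : ℕ => ((i : ℝ) ^ 2)⁻¹), zero_add,
    Ico_add_one_left_eq_Ioo]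
  exact sum_Ioo_inv_sq_le n _

section

variable {a : ℕ → ℝ} {K : ℝ}

theorem sq_le_mul_inv_sq_of_mul_le (h0 : ∀ j, 0 ≤ a j) (hK : ∀ j : ℕ, ((j : ℝ) + 1) * a j ≤ K)
    (j : ℕ) : a j ^ 2 ≤ K ^ 2 * (((j : ℝ) + 1) ^ 2)⁻¹ := by
  rw [← div_eq_mul_inv, le_div_iff₀ (by positivity), ← mul_pow, mul_comm]
  exact pow_le_pow_left₀ (mul_nonneg (by positivity) (h0 j)) (hK j) 2

theorem summable_sq_of_mul_le (h0 : ∀ j, 0 ≤ a j) (hK : ∀ j : ℕ, ((j : ℝ) + 1) * a j ≤ K) :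
    Summable fun j => a j ^ 2 := by
  have hinv : Summable fun j : ℕ => (((j : ℝ) + 1) ^ 2)⁻¹ := by
    simpa using (summable_nat_add_iff 1).2 (Real.summable_nat_pow_inv.2 one_lt_two)
  exact (hinv.mul_left _).of_nonneg_of_le (fun j => sq_nonneg _)
    (sq_le_mul_inv_sq_of_mul_le h0 hK)

theorem summable_pow_of_mul_le (h0 : ∀ j, 0 ≤ a j) (h1 : ∀ j, a j ≤ 1)
    (hK : ∀ j : ℕ, ((j : ℝ) + 1) * a j ≤ K) {k : ℕ} (hk : 2 ≤ k) : Summable fun j => a j ^ k :=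
  (summable_sq_of_mul_le h0 hK).of_nonneg_of_le (fun j => pow_nonneg (h0 j) k)
    fun j => pow_le_pow_of_le_one (h0 j) (h1 j) hk

theorem summable_one_sub_pow_sub_one_add_mul (h0 : ∀ j, 0 ≤ a j) (h1 : ∀ j, a j ≤ 1)
    (hK : ∀ j : ℕ, ((j : ℝ) + 1) * a j ≤ K) (n : ℕ) :
    Summable fun j => (1 - a j) ^ n - 1 + n * a j :=
  ((summable_sq_of_mul_le h0 hK).mul_left _).of_nonneg_of_le
    (fun j => one_sub_pow_sub_one_add_mul_nonneg (by linarith [h1 j]) n)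
    fun j => one_sub_pow_sub_one_add_mul_le_sq (h0 j) (h1 j) n

theorem tsum_one_sub_pow_sub_one_add_mul_nat_add_le (h0 : ∀ j, 0 ≤ a j) (h1 : ∀ j, a j ≤ 1)
    (hK : ∀ j : ℕ, ((j : ℝ) + 1) * a j ≤ K) (n : ℕ) :
    ∑' j, ((1 - a (j + n)) ^ n - 1 + n * a (j + n)) ≤ K ^ 2 * n := by
  have hsq : ∀ j, a (j + n) ^ 2 ≤ K ^ 2 * ((j + (n + 1) : ℕ) ^ 2 : ℝ)⁻¹ := fun j => by
    simpa [add_assoc] using sq_le_mul_inv_sq_of_mul_le h0 hK (j + n)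
  calc ∑' j, ((1 - a (j + n)) ^ n - 1 + n * a (j + n))
      ≤ ∑' j, (n : ℝ) ^ 2 / 2 * (K ^ 2 * ((j + (n + 1) : ℕ) ^ 2 : ℝ)⁻¹) := by
        refine Summable.tsum_le_tsum (fun j => ?_) ?_ ?_
        · exact (one_sub_pow_sub_one_add_mul_le_sq (h0 _) (h1 _) n).trans
            (mul_le_mul_of_nonneg_left (hsq j) (by positivity))
        · exact (summable_nat_add_iff n).2 (summable_one_sub_pow_sub_one_add_mul h0 h1 hK n)
        · exact ((summable_nat_add_iff (n + 1)).2
            (Real.summable_nat_pow_inv.2 one_lt_two)).mul_left _ |>.mul_left _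
    _ = (n : ℝ) ^ 2 / 2 * K ^ 2 * ∑' j : ℕ, ((j + (n + 1) : ℕ) ^ 2 : ℝ)⁻¹ := by
        rw [tsum_mul_left, tsum_mul_left, mul_assoc]
    _ ≤ (n : ℝ) ^ 2 / 2 * K ^ 2 * (2 / (n + 1)) := by
        gcongr
        exact tsum_inv_nat_add_sq_le n
    _ ≤ K ^ 2 * n := by
        rw [mul_div_assoc', div_le_iff₀ (by positivity)]
        nlinarith [sq_nonneg K, mul_nonneg (sq_nonneg K) (n.cast_nonneg : (0 : ℝ) ≤ n)]

theorem isBigO_tsum_one_sub_pow_sub_one_add_mul_sub (h0 : ∀ j, 0 ≤ a j) (h1 : ∀ j, a j ≤ 1)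
    (hK : ∀ j : ℕ, ((j : ℝ) + 1) * a j ≤ K) :
    (fun n : ℕ => ∑' j, ((1 - a j) ^ n - 1 + n * a j) - n * ∑ j ∈ range n, a j)
      =O[atTop] fun n => (n : ℝ) := by
  refine IsBigO.of_bound (1 + K ^ 2) (Eventually.of_forall fun n => ?_)
  have hpow : ∀ j, (1 - a j) ^ n ≤ 1 := fun j =>
    pow_le_one₀ (by linarith [h1 j]) (by linarith [h0 j])
  have hhead : ∑ j ∈ range n, ((1 - a j) ^ n - 1 + n * a j) - n * ∑ j ∈ range n, a j
      = ∑ j ∈ range n, ((1 - a j) ^ n - 1) := by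
    rw [mul_sum, ← sum_sub_distrib]
    exact sum_congr rfl fun j _ => by ring
  have hhead_le : ∑ j ∈ range n, ((1 - a j) ^ n - 1) ≤ 0 :=
    sum_nonpos fun j _ => by linarith [hpow j]
  have hhead_ge : -(n : ℝ) ≤ ∑ j ∈ range n, ((1 - a j) ^ n - 1) := by
    have := sum_le_sum fun j (_ : j ∈ range n) => show (-1 : ℝ) ≤ (1 - a j) ^ n - 1 by
      linarith [pow_nonneg (by linarith [h1 j] : 0 ≤ 1 - a j) n]
    simpa using this
  have htail_ge : 0 ≤ ∑' j, ((1 - a (j + n)) ^ n - 1 + n * a (j + n)) :=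
    tsum_nonneg fun j => one_sub_pow_sub_one_add_mul_nonneg (by linarith [h1 (j + n)]) n
  have htail_le := tsum_one_sub_pow_sub_one_add_mul_nat_add_le h0 h1 hK n
  rw [← (summable_one_sub_pow_sub_one_add_mul h0 h1 hK n).sum_add_tsum_nat_add n,
    Real.norm_of_nonneg (n.cast_nonneg), Real.norm_eq_abs, abs_le]
  constructor <;> linarith
end

theorem isEquivalent_harmonic_log :
    (fun n : ℕ => (harmonic n : ℝ)) ~[atTop] fun n => log n :=
  (tendsto_harmonic_sub_log.isBigO_one ℝ).trans_isLittleO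
    (isLittleO_const_log_atTop.comp_tendsto tendsto_natCast_atTop_atTop)

theorem isEquivalent_sum_range_log {a : ℕ → ℝ} {c : ℝ} (hc : c ≠ 0)
    (ha : Tendsto (fun j : ℕ => ((j : ℝ) + 1) * a j) atTop (𝓝 c)) :
    (fun n => ∑ j ∈ range n, a j) ~[atTop] fun n => c * log n := by
  have hH : ∀ n, ∑ j ∈ range n, ((j : ℝ) + 1)⁻¹ = harmonic n := fun n => by simp [harmonic]
  have herr : (fun j : ℕ => a j - c * ((j : ℝ) + 1)⁻¹) =o[atTop] fun j => ((j : ℝ) + 1)⁻¹ := by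
    have h0 := ((isLittleO_one_iff ℝ).2 (tendsto_sub_nhds_zero_iff.2 ha)).mul_isBigO
      (isBigO_refl (fun j : ℕ => ((j : ℝ) + 1)⁻¹) atTop)
    refine (h0.congr_left fun j => ?_).congr_right fun j => one_mul _
    field_simp
  have hsum := herr.sum_range (fun j => by positivity) <| by
    simpa only [hH] using isEquivalent_harmonic_log.symm.tendsto_atTop
      (tendsto_log_atTop.comp tendsto_natCast_atTop_atTop)
  simp only [hH, sum_sub_distrib, ← mul_sum] at hsum
  have hsum' : (fun n => ∑ j ∈ range n, a j) ~[atTop] fun n => c * (harmonic n : ℝ) :=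
    hsum.const_mul_right hc
  exact hsum'.trans ((IsEquivalent.refl (u := fun _ => c)).mul isEquivalent_harmonic_log)

theorem isEquivalent_tsum_one_sub_pow_sub_one_add_mul {a : ℕ → ℝ} {c : ℝ} (hc : c ≠ 0)
    (h0 : ∀ j, 0 ≤ a j) (h1 : ∀ j, a j ≤ 1)
    (ha : Tendsto (fun j : ℕ => ((j : ℝ) + 1) * a j) atTop (𝓝 c)) :
    (fun n : ℕ => ∑' j, ((1 - a j) ^ n - 1 + n * a j)) ~[atTop] fun n => c * n * log n := by
  obtain ⟨K, hK⟩ := ha.bddAbove_range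
  have hmain : (fun n : ℕ => (n : ℝ) * ∑ j ∈ range n, a j) ~[atTop] fun n => c * n * log n := by
    refine ((IsEquivalent.refl (u := fun n : ℕ => (n : ℝ))).mul
      (isEquivalent_sum_range_log hc ha)).congr_right (Eventually.of_forall fun n => ?_)
    simp only [Pi.mul_apply]
    ring
  have hlog : (fun _ : ℕ => (1 : ℝ)) =o[atTop] fun n => c * log n :=
    (isLittleO_const_log_atTop.comp_tendsto tendsto_natCast_atTop_atTop).const_mul_right hc
  have hn : (fun n : ℕ => (n : ℝ)) =o[atTop] fun n => c * n * log n := by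
    simpa [mul_left_comm, mul_assoc] using
      (isBigO_refl (fun n : ℕ => (n : ℝ)) atTop).mul_isLittleO hlog
  have hrem := (isBigO_tsum_one_sub_pow_sub_one_add_mul_sub h0 h1
    fun j => hK ⟨j, rfl⟩).trans_isLittleO hn
  exact (hmain.add_isLittleO hrem).congr_left (Eventually.of_forall fun n => by simp)

theorem sum_Icc_two_choose_mul_tsum_pow {a : ℕ → ℝ}
    (hs : ∀ k, 2 ≤ k → Summable fun j => a j ^ k) (n : ℕ) :
    ∑ k ∈ Icc 2 n, (n.choose k : ℝ) * (-1) ^ k * ∑' j, a j ^ k =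
      ∑' j, ((1 - a j) ^ n - 1 + n * a j) := by
  simp_rw [← sum_Icc_two_choose_mul_neg_one_pow_mul_pow, ← tsum_mul_left]
  exact (Summable.tsum_finsetSum fun k hk => (hs k (mem_Icc.1 hk).1).mul_left _).symm

theorem moment_zeta_alternating_sum_asymptotics_alpha_one_general
    (f : ℝ → ℝ) (hcont : ContinuousOn f (Set.Icc (0 : ℝ) 1)) (hnn : ∀ x, 0 ≤ f x)
    (hprob : ∫ x in (0 : ℝ)..1, f x = 1)
    (c : ℝ) (hc : 0 < c)
    (hlim : Filter.Tendsto f (nhdsWithin 1 (Set.Iio (1 : ℝ))) (nhds c)) :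
    (∀ k : ℕ, 2 ≤ k → Summable (fun j : ℕ => (∫ x in (0 : ℝ)..1, x ^ (j + 1) * f x) ^ k)) ∧
    Asymptotics.IsEquivalent Filter.atTop
      (fun n : ℕ => ∑ k ∈ Finset.Icc 2 n, (n.choose k : ℝ) * (-1 : ℝ) ^ k *
        ∑' j : ℕ, (∫ x in (0 : ℝ)..1, x ^ (j + 1) * f x) ^ k)
      (fun n : ℕ => c * n * Real.log n) := by
  set m : ℕ → ℝ := fun j => ∫ x in (0 : ℝ)..1, x ^ (j + 1) * f x
  have hfi : IntervalIntegrable f volume 0 1 := hcont.intervalIntegrable_of_Icc zero_le_one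
  have hm0 : ∀ j, 0 ≤ m j := fun j =>
    integral_nonneg zero_le_one fun x hx => mul_nonneg (pow_nonneg hx.1 _) (hnn x)
  have hm1 : ∀ j, m j ≤ 1 := fun j => hprob ▸ integral_mono_on zero_le_one
    (hfi.continuousOn_mul (continuous_pow _).continuousOn) hfi
    fun x hx => mul_le_of_le_one_left (hnn x) (pow_le_one₀ hx.1 hx.2)
  have hmc : Tendsto (fun j : ℕ => ((j : ℝ) + 1) * m j) atTop (𝓝 c) := by
    have hshift := (tendsto_add_one_mul_integral_pow_mul hfi hlim).comp (tendsto_add_atTop_nat 1)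
    have hratio := (tendsto_natCast_div_add_atTop (1 : ℝ)).comp (tendsto_add_atTop_nat 1)
    rw [← one_mul c]
    refine (hratio.mul hshift).congr fun j => ?_
    simp only [Function.comp_apply, Nat.cast_add, Nat.cast_one]
    field_simp
    rfl
  obtain ⟨K, hK⟩ := hmc.bddAbove_range
  have hs : ∀ k, 2 ≤ k → Summable fun j => m j ^ k := fun k hk =>
    summable_pow_of_mul_le hm0 hm1 (fun j => hK ⟨j, rfl⟩) hk
  exact ⟨hs, (isEquivalent_tsum_one_sub_pow_sub_one_add_mul hc.ne' hm0 hm1 hmc).congr_left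
    (Eventually.of_forall fun n => (sum_Icc_two_choose_mul_tsum_pow hs n).symm)⟩

/-- Let `F` be a Borel probability measure on `[0,1]` with continuous density
`f` satisfying `lim_{x→1⁻} f(x) = c > 0`.  Then `ζ_F(k) = ∑_{j=1}^∞ m_j^k` converges for every
`k ≥ 2`, and `∑_{k=2}^n C(n,k)(−1)^k ζ_F(k) ∼ c n log n` as `n → ∞`. -/
theorem moment_zeta_alternating_sum_asymptotics_alpha_one
    (f : ℝ → ℝ) (hcont : ContinuousOn f (Set.Icc (0 : ℝ) 1)) (hnn : ∀ x, 0 ≤ f x)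
    (hsupp : ∀ x, x ∉ Set.Icc (0 : ℝ) 1 → f x = 0)
    (hprob : ∫ x in (0 : ℝ)..1, f x = 1)
    (c : ℝ) (hc : 0 < c)
    (hlim : Filter.Tendsto f (nhdsWithin 1 (Set.Iio (1 : ℝ))) (nhds c)) :
    (∀ k : ℕ, 2 ≤ k → Summable (fun j : ℕ => (∫ x in (0 : ℝ)..1, x ^ (j + 1) * f x) ^ k)) ∧
    Asymptotics.IsEquivalent Filter.atTop
      (fun n : ℕ => ∑ k ∈ Finset.Icc 2 n, (n.choose k : ℝ) * (-1 : ℝ) ^ k *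
        ∑' j : ℕ, (∫ x in (0 : ℝ)..1, x ^ (j + 1) * f x) ^ k)
      (fun n : ℕ => c * n * Real.log n) :=
  moment_zeta_alternating_sum_asymptotics_alpha_one_general f hcont hnn hprob c hc hlim
end

section
/- Let q_1, …, q_n be independent, identically distributed random variables with values in [0,1], whose common cumulative distribution function H satisfies H(x) = c x^{β+1} + O(x^{β+1+δ}) as x → 0⁺ for some constants c > 0, β > −1, δ > 0. Then lim_{n→∞} n^{1/(1+β)} E[ min_{1 ≤ i ≤ n} q_i ] = ∫₀^∞ exp(−c u^{1+β}) du. -/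
open MeasureTheory ProbabilityTheory

/-!
By the layer-cake formula and independence, `E[min_{i<n} q_i] = ∫₀^∞ (1 - H t)^n dt`, and the
substitution `t = n^{-1/p} u` with `p = 1 + β` turns `n^{1/p} E[min_{i<n} q_i]` into
`∫₀^∞ (1 - H(n^{-1/p} u))^n du`. Since `H(x) ~ c x^p`, the integrand tends to `exp(-c u^p)`
pointwise. For domination, `H(x) ≥ b x^p` on `(0, 1]` for some `b > 0` (near `0` by the
asymptotics, beyond that by monotonicity), so the integrand is at most `exp(-b u^p)`.
-/

open Filter Set Asymptotics Topology Real

section Rescaling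

variable {F : ℝ → ℝ} {b c p : ℝ}

lemma integrableOn_exp_neg_mul_rpow (hp : 0 < p) (hc : 0 < c) :
    IntegrableOn (fun x : ℝ => exp (-(c * x ^ p))) (Ioi 0) :=
  (integrableOn_rpow_mul_exp_neg_mul_rpow (s := 0) (by norm_num) hp hc).congr_fun
    (fun x _ => by simp [neg_mul]) measurableSet_Ioi

lemma Asymptotics.IsBigO.isEquivalent_mul_rpow (hc : c ≠ 0) {δ : ℝ} (hδ : 0 < δ)
    (h : (fun x => F x - c * x ^ p) =O[𝓝[>] 0] fun x => x ^ (p + δ)) :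
    F ~[𝓝[>] 0] fun x => c * x ^ p := by
  have hδ0 : Tendsto (fun x : ℝ => x ^ δ) (𝓝[>] 0) (𝓝 0) := by
    simpa [zero_rpow hδ.ne'] using
      ((continuousAt_rpow_const 0 δ (Or.inr hδ.le)).tendsto.mono_left nhdsWithin_le_nhds)
  have hsmall : (fun x : ℝ => x ^ (p + δ)) =o[𝓝[>] 0] fun x => c * x ^ p := by
    refine (((isLittleO_one_iff ℝ).mpr hδ0).mul_isBigO
      ((isBigO_refl (fun x : ℝ => x ^ p) _).const_mul_right hc)).congr' ?_ ?_
    · filter_upwards [self_mem_nhdsWithin] with x hx using by rw [add_comm p, rpow_add hx]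
    · simp
  exact (h.trans_isLittleO hsmall).isEquivalent

lemma rpow_neg_inv_mul_rpow (hp : 0 < p) {n : ℝ} (hn : 0 < n) {u : ℝ} (hu : 0 ≤ u) :
    (n ^ (-p⁻¹) * u) ^ p = u ^ p / n := by
  rw [mul_rpow (rpow_nonneg hn.le _) hu, ← rpow_mul hn.le, neg_mul, inv_mul_cancel₀ hp.ne',
    rpow_neg_one, inv_mul_eq_div]

lemma rpow_mul_integral_Ioi_eq (f : ℝ → ℝ) {a : ℝ} (ha : 0 < a) (r : ℝ) :
    a ^ r * ∫ t in Ioi 0, f t = ∫ u in Ioi 0, f (a ^ (-r) * u) := by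
  rw [integral_comp_mul_left_Ioi f 0 (rpow_pos_of_pos ha _), mul_zero, smul_eq_mul,
    rpow_neg ha.le, inv_inv]

lemma exists_mul_rpow_le_of_isEquivalent (hF : Monotone F) (hc : 0 < c) (hp : 0 < p)
    (hasymp : F ~[𝓝[>] 0] fun x => c * x ^ p) :
    ∃ b > 0, ∀ x ∈ Ioc (0 : ℝ) 1, b * x ^ p ≤ F x := by
  have hnear : ∀ᶠ x in 𝓝[>] (0 : ℝ), c / 2 * x ^ p ≤ F x := by
    filter_upwards [hasymp.isLittleO.bound (by norm_num : (0 : ℝ) < 1 / 2), self_mem_nhdsWithin]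
      with x hx hx0
    have hxp : 0 ≤ c * x ^ p := mul_nonneg hc.le (rpow_nonneg (le_of_lt hx0) p)
    rw [Pi.sub_apply, Real.norm_eq_abs, Real.norm_eq_abs, abs_of_nonneg hxp] at hx
    linarith [(abs_le.mp hx).1]
  obtain ⟨a, ha : 0 < a, hsub⟩ := mem_nhdsGT_iff_exists_Ioo_subset.mp hnear
  set x₀ := min (a / 2) 1
  have hx₀ : 0 < x₀ := lt_min (by linarith) one_pos
  refine ⟨c / 2 * x₀ ^ p, by positivity, fun x ⟨hx, hx1⟩ => ?_⟩
  have hmin : x * x₀ ≤ min x x₀ :=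
    le_min (mul_le_of_le_one_right hx.le (min_le_right _ _)) (mul_le_of_le_one_left hx₀.le hx1)
  calc c / 2 * x₀ ^ p * x ^ p = c / 2 * (x * x₀) ^ p := by
        rw [mul_rpow hx.le hx₀.le]; ring
    _ ≤ c / 2 * (min x x₀) ^ p := by gcongr
    _ ≤ F (min x x₀) := hsub ⟨lt_min hx hx₀, (min_le_right _ _).trans_lt
        ((min_le_left _ _).trans_lt (by linarith))⟩
    _ ≤ F x := hF (min_le_left _ _)

lemma le_one_of_monotone (hF : Monotone F) (hF1 : ∀ x, 1 ≤ x → F x = 1) (x : ℝ) :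
    F x ≤ 1 :=
  (hF (le_max_left x 1)).trans (hF1 _ (le_max_right x 1)).le

lemma one_sub_le_exp_neg_mul_rpow (hF1 : ∀ x, 1 ≤ x → F x = 1)
    (hb : ∀ x ∈ Ioc (0 : ℝ) 1, b * x ^ p ≤ F x) {x : ℝ} (hx : 0 < x) :
    1 - F x ≤ exp (-(b * x ^ p)) := by
  rcases le_or_gt x 1 with hx1 | hx1
  · linarith [hb x ⟨hx, hx1⟩, add_one_le_exp (-(b * x ^ p))]
  · rw [hF1 x hx1.le, sub_self]
    exact (exp_pos _).le

lemma norm_one_sub_pow_le_exp_neg_mul_rpow (hp : 0 < p) (hF : Monotone F)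
    (hF1 : ∀ x, 1 ≤ x → F x = 1) (hb : ∀ x ∈ Ioc (0 : ℝ) 1, b * x ^ p ≤ F x) {n : ℕ} (hn : 0 < n)
    {u : ℝ} (hu : 0 < u) :
    ‖(1 - F ((n : ℝ) ^ (-p⁻¹) * u)) ^ n‖ ≤ exp (-(b * u ^ p)) := by
  have hn' : (0 : ℝ) < n := Nat.cast_pos.mpr hn
  have h0 : 0 ≤ 1 - F ((n : ℝ) ^ (-p⁻¹) * u) := sub_nonneg.mpr (le_one_of_monotone hF hF1 _)
  rw [Real.norm_of_nonneg (pow_nonneg h0 n)]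
  calc _ ≤ exp (-(b * ((n : ℝ) ^ (-p⁻¹) * u) ^ p)) ^ n :=
        pow_le_pow_left₀ h0 (one_sub_le_exp_neg_mul_rpow hF1 hb (by positivity)) n
    _ = exp (-(b * u ^ p)) := by
        rw [← exp_nat_mul, rpow_neg_inv_mul_rpow hp hn' hu.le]
        field_simp

lemma tendsto_nat_mul_of_isEquivalent_rpow (hp : 0 < p) (hasymp : F ~[𝓝[>] 0] fun x => c * x ^ p)
    {u : ℝ} (hu : 0 < u) :
    Tendsto (fun n : ℕ => n * F ((n : ℝ) ^ (-p⁻¹) * u)) atTop (𝓝 (c * u ^ p)) := by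
  have hx : Tendsto (fun n : ℕ => (n : ℝ) ^ (-p⁻¹) * u) atTop (𝓝[>] 0) := by
    refine tendsto_nhdsWithin_iff.mpr ⟨?_, ?_⟩
    · simpa using ((tendsto_rpow_neg_atTop (inv_pos.mpr hp)).comp
        tendsto_natCast_atTop_atTop).mul_const u
    · filter_upwards [eventually_gt_atTop 0] with n hn
      exact mul_pos (rpow_pos_of_pos (Nat.cast_pos.mpr hn) _) hu
  have hequiv := (IsEquivalent.refl (u := fun n : ℕ => (n : ℝ))).mul (hasymp.comp_tendsto hx)
  refine (hequiv.congr_right ?_).symm.tendsto_nhds tendsto_const_nhds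
  filter_upwards [eventually_gt_atTop 0] with n hn
  have hn' : (0 : ℝ) < n := Nat.cast_pos.mpr hn
  simp only [Pi.mul_apply, Function.comp_apply, rpow_neg_inv_mul_rpow hp hn' hu.le]
  field_simp

theorem tendsto_rpow_inv_mul_integral_one_sub_pow (hF : Monotone F)
    (hF1 : ∀ x, 1 ≤ x → F x = 1) (hc : 0 < c) (hp : 0 < p)
    (hasymp : F ~[𝓝[>] 0] fun x => c * x ^ p) :
    Tendsto (fun n : ℕ => (n : ℝ) ^ p⁻¹ * ∫ t in Ioi 0, (1 - F t) ^ n) atTop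
      (𝓝 (∫ u in Ioi 0, exp (-(c * u ^ p)))) := by
  obtain ⟨b, hb, hbF⟩ := exists_mul_rpow_le_of_isEquivalent hF hc hp hasymp
  have hrescale : ∀ᶠ n : ℕ in atTop, (n : ℝ) ^ p⁻¹ * ∫ t in Ioi 0, (1 - F t) ^ n
      = ∫ u in Ioi 0, (1 - F ((n : ℝ) ^ (-p⁻¹) * u)) ^ n := by
    filter_upwards [eventually_gt_atTop 0] with n hn
    exact rpow_mul_integral_Ioi_eq (fun t => (1 - F t) ^ n) (Nat.cast_pos.mpr hn) _
  refine (tendsto_integral_filter_of_dominated_convergence (fun u => exp (-(b * u ^ p)))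
    (Eventually.of_forall fun n => ?_) ?_ (integrableOn_exp_neg_mul_rpow hp hb) ?_).congr'
    (EventuallyEq.symm hrescale)
  · exact ((measurable_const.sub (hF.measurable.comp (measurable_const_mul _))).pow_const
      _).aestronglyMeasurable
  · filter_upwards [eventually_gt_atTop 0] with n hn
    exact (ae_restrict_iff' measurableSet_Ioi).mpr (.of_forall fun u hu =>
      norm_one_sub_pow_le_exp_neg_mul_rpow hp hF hF1 hbF hn hu)
  · refine (ae_restrict_iff' measurableSet_Ioi).mpr (.of_forall fun u (hu : 0 < u) => ?_)
    simpa [sub_eq_add_neg] using tendsto_one_add_pow_exp_of_tendsto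
      (by simpa only [mul_neg] using (tendsto_nat_mul_of_isEquivalent_rpow hp hasymp hu).neg)

end Rescaling

section Minimum

variable {Ω : Type*} [MeasurableSpace Ω] {μ : Measure Ω} {H : ℝ → ℝ}

lemma monotone_of_eq_measure_le [IsFiniteMeasure μ] {X : Ω → ℝ}
    (hH : ∀ x, H x = (μ {ω | X ω ≤ x}).toReal) : Monotone H := fun a b hab => by
  simp only [hH]
  exact ENNReal.toReal_mono (measure_ne_top _ _) (measure_mono fun ω h => le_trans h hab)

lemma eq_one_of_eq_measure_le [IsProbabilityMeasure μ] {X : Ω → ℝ} (hX : ∀ ω, X ω ≤ 1)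
    (hH : ∀ x, H x = (μ {ω | X ω ≤ x}).toReal) {x : ℝ} (hx : 1 ≤ x) : H x = 1 := by
  rw [hH, eq_univ_of_forall (s := {ω | X ω ≤ x}) fun ω => (hX ω).trans hx, measure_univ,
    ENNReal.toReal_one]

lemma lt_iInf_fin_iff {n : ℕ} (hn : 0 < n) {t : ℝ} {x : Fin n → ℝ} :
    t < ⨅ i, x i ↔ ∀ i, t < x i := by
  have : Nonempty (Fin n) := Fin.pos_iff_nonempty.mp hn
  obtain ⟨i₀, hi₀⟩ := exists_eq_ciInf_of_finite (f := x)
  exact ⟨fun h i => h.trans_le (ciInf_le (Finite.bddBelow_range x) i),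
    fun h => hi₀ ▸ h i₀⟩

variable [IsProbabilityMeasure μ] {q : ℕ → Ω → ℝ}

lemma measureReal_lt_iInf_fin (hmeas : ∀ i, Measurable (q i)) (hindep : iIndepFun q μ)
    (hH : ∀ i x, H x = (μ {ω | q i ω ≤ x}).toReal) {n : ℕ} (hn : 0 < n) (t : ℝ) :
    μ.real {ω | t < ⨅ i : Fin n, q i ω} = (1 - H t) ^ n := by
  have hset : {ω | t < ⨅ i : Fin n, q i ω} =
      ⋂ i ∈ (Finset.univ : Finset (Fin n)), q i ⁻¹' Ioi t := by
    ext ω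
    simp [lt_iInf_fin_iff hn]
  have htail : ∀ i, μ.real (q i ⁻¹' Ioi t) = 1 - H t := fun i => by
    rw [← compl_Iic, preimage_compl, probReal_compl_eq_one_sub (hmeas i measurableSet_Iic),
      hH i t, measureReal_def]
    rfl
  rw [measureReal_def, hset, (hindep.precomp Fin.val_injective).measure_inter_preimage_eq_mul _
    (fun i _ => measurableSet_Ioi), ENNReal.toReal_prod]
  simp [← measureReal_def, htail]

lemma integral_iInf_fin_eq (hmeas : ∀ i, Measurable (q i))
    (hval : ∀ i ω, q i ω ∈ Icc (0 : ℝ) 1) (hindep : iIndepFun q μ)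
    (hH : ∀ i x, H x = (μ {ω | q i ω ≤ x}).toReal) {n : ℕ} (hn : 0 < n) :
    ∫ ω, (⨅ i : Fin n, q i ω) ∂μ = ∫ t in Ioi 0, (1 - H t) ^ n := by
  have : Nonempty (Fin n) := Fin.pos_iff_nonempty.mp hn
  have hnonneg : ∀ ω, 0 ≤ ⨅ i : Fin n, q i ω := fun ω => le_ciInf fun i => (hval i ω).1
  have hint : Integrable (fun ω => ⨅ i : Fin n, q i ω) μ :=
    .of_bound (Measurable.iInf fun i : Fin n => hmeas i).aestronglyMeasurable 1 <|
      .of_forall fun ω => by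
        rw [Real.norm_eq_abs, abs_of_nonneg (hnonneg ω)]
        exact (ciInf_le (Finite.bddBelow_range _) ⟨0, hn⟩).trans (hval _ ω).2
  rw [hint.integral_eq_integral_meas_lt (.of_forall hnonneg)]
  exact setIntegral_congr_fun measurableSet_Ioi fun t _ =>
    measureReal_lt_iInf_fin hmeas hindep hH hn t

end Minimum

/-- Let `q_1, q_2, …` be i.i.d. random variables with values in `[0,1]` whose
common cumulative distribution function `H` satisfies `H(x) = c x^{β+1} + O(x^{β+1+δ})` as
`x → 0⁺` (with `c > 0`, `β > −1`, `δ > 0`).  Then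
`lim_{n→∞} n^{1/(1+β)} E[min_{1≤i≤n} q_i] = ∫₀^∞ exp(−c u^{1+β}) du`. -/
theorem expectation_min_asymptotics
    {Ω : Type*} [MeasureSpace Ω] [IsProbabilityMeasure (ℙ : Measure Ω)]
    (q : ℕ → Ω → ℝ) (hmeas : ∀ i, Measurable (q i))
    (hval : ∀ i ω, q i ω ∈ Set.Icc (0 : ℝ) 1)
    (hindep : iIndepFun q ℙ)
    (H : ℝ → ℝ) (hH : ∀ i x, H x = (ℙ {ω | q i ω ≤ x}).toReal)
    (c β δ : ℝ) (hc : 0 < c) (hβ : -1 < β) (hδ : 0 < δ)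
    (hasymp : Asymptotics.IsBigO (nhdsWithin 0 (Set.Ioi (0 : ℝ)))
      (fun x => H x - c * x ^ (β + 1)) (fun x => x ^ (β + 1 + δ))) :
    Filter.Tendsto
      (fun n : ℕ => (n : ℝ) ^ ((1 : ℝ) / (1 + β)) * ∫ ω, (⨅ i : Fin n, q i ω) ∂ℙ)
      Filter.atTop
      (nhds (∫ u in Set.Ioi (0 : ℝ), Real.exp (-(c * u ^ (1 + β))))) := by
  have hp : 0 < 1 + β := by linarith
  have hequiv : H ~[𝓝[>] 0] fun x => c * x ^ (1 + β) :=
    IsBigO.isEquivalent_mul_rpow hc.ne' hδ (by simpa only [add_comm β 1] using hasymp)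
  have hmono : Monotone H := monotone_of_eq_measure_le (hH 0)
  have hone : ∀ x, 1 ≤ x → H x = 1 := fun x =>
    eq_one_of_eq_measure_le (fun ω => (hval 0 ω).2) (hH 0)
  refine (tendsto_rpow_inv_mul_integral_one_sub_pow hmono hone hc hp hequiv).congr' ?_
  filter_upwards [eventually_gt_atTop 0] with n hn
  rw [one_div, integral_iInf_fin_eq hmeas hval hindep hH hn]
end

section
/- Let p_1, p_2, … be independent, identically distributed random variables with values in [0,1] whose common density f satisfies f(1−x) = 1 + O(x^{δ}) as x → 0⁺ for some δ > 0 (the case β = 0). Set S_n = ∑_{i=1}^n 1/(1 − p_i). Then for every ε > 0, lim_{n→∞} P(|S_n/(n log n) − 1| > ε) = 0. -/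
/-!
Truncate at `c = n log n`, as in Feller's weak law for triangular arrays. The variables
`q i = 1 - p i` have density `1 + O(u^δ)` near `0`, so with probability at most
`n P(q < 1/c) = O(1 / log n)` some summand `1 / q i` exceeds `c`; otherwise `S_n` is the sum of the
truncations `min(c, 1 / q i)`. These have mean `log c + O(1)`, since
`∫_{1/c}^a (1 + O(u^δ)) du / u = log (a c) + O(1)`, and second moment `O(c)`. As
`n log c = n log n + o(n log n)`, Chebyshev's inequality bounds the probability of a relative
deviation `ε` of the truncated sum by `O(n c / (ε c)^2) = O(1 / (ε^2 log n))`.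
-/

open MeasureTheory ProbabilityTheory Filter Set
open scoped ENNReal Topology

section Truncation

variable {Ω : Type*} [MeasurableSpace Ω] {μ : Measure Ω} [IsProbabilityMeasure μ]

theorem measure_lt_abs_sum_div_sub_one_le {X Y : ℕ → Ω → ℝ} {s : Finset ℕ} {b ε : ℝ}
    (hb : 0 < b) (hε : 0 < ε) (hY : ∀ i ∈ s, MemLp (Y i) 2 μ)
    (hindep : (s : Set ℕ).Pairwise fun i j => IndepFun (Y i) (Y j) μ)
    (hmean : |∑ i ∈ s, μ[Y i] - b| ≤ ε / 2 * b) :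
    μ {ω | ε < |(∑ i ∈ s, X i ω) / b - 1|} ≤
      ∑ i ∈ s, μ {ω | X i ω ≠ Y i ω} +
        ENNReal.ofReal ((∑ i ∈ s, variance (Y i) μ) / (ε / 2 * b) ^ 2) := by
  set T := ∑ i ∈ s, Y i
  have hET : μ[T] = ∑ i ∈ s, μ[Y i] := by
    simp only [T, Finset.sum_apply]
    exact integral_finsetSum s fun i hi => (hY i hi).integrable one_le_two
  have hsub : {ω | ε < |(∑ i ∈ s, X i ω) / b - 1|} ⊆
      (⋃ i ∈ s, {ω | X i ω ≠ Y i ω}) ∪ {ω | ε / 2 * b ≤ |T ω - μ[T]|} := by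
    intro ω hω
    by_contra hnot
    simp only [mem_union, mem_iUnion, mem_ofPred_eq, not_or, not_exists, not_le, not_not] at hnot
    obtain ⟨hXY, hdev⟩ := hnot
    have hsum : ∑ i ∈ s, X i ω = T ω := by
      simp only [T, Finset.sum_apply]
      exact Finset.sum_congr rfl hXY
    have hdev' : |T ω - b| < ε * b := calc
      |T ω - b| ≤ |T ω - μ[T]| + |μ[T] - b| := abs_sub_le _ _ _
      _ < ε / 2 * b + ε / 2 * b := add_lt_add_of_lt_of_le hdev (hET ▸ hmean)
      _ = ε * b := by ring
    rw [mem_ofPred_eq, hsum, div_sub_one hb.ne', abs_div, abs_of_pos hb, lt_div_iff₀ hb] at hω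
    linarith
  calc μ {ω | ε < |(∑ i ∈ s, X i ω) / b - 1|}
      ≤ μ (⋃ i ∈ s, {ω | X i ω ≠ Y i ω}) + μ {ω | ε / 2 * b ≤ |T ω - μ[T]|} :=
        (measure_mono hsub).trans (measure_union_le _ _)
    _ ≤ _ := by
      gcongr
      · exact measure_biUnion_finset_le _ _
      · rw [← IndepFun.variance_sum hY hindep]
        exact meas_ge_le_variance_div_sq (memLp_finsetSum' s hY) (by positivity)

theorem measure_lt_abs_sum_div_sub_one_le_of_iIndepFun {q : ℕ → Ω → ℝ}
    (hq : ∀ i, Measurable (q i)) (hindep : iIndepFun q μ) {ν : Measure ℝ}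
    (hlaw : ∀ i, μ.map (q i) = ν) {F φ : ℝ → ℝ} (hF : Measurable F) (hφ : Measurable φ)
    {M : ℝ} (hφM : ∀ x, |φ x| ≤ M) {n : ℕ} {b ε : ℝ} (hb : 0 < b) (hε : 0 < ε)
    (hmean : |n * ∫ x, φ x ∂ν - b| ≤ ε / 2 * b) :
    μ {ω | ε < |(∑ i ∈ Finset.range n, F (q i ω)) / b - 1|} ≤
      n * ν {x | F x ≠ φ x} + ENNReal.ofReal (n * (∫ x, φ x ^ 2 ∂ν) / (ε / 2 * b) ^ 2) := by
  have hintegral : ∀ i {h : ℝ → ℝ}, Measurable h → μ[fun ω => h (q i ω)] = ∫ x, h x ∂ν :=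
    fun i h hh => by rw [← hlaw i, integral_map (hq i).aemeasurable hh.aestronglyMeasurable]
  have hY : ∀ i, MemLp (fun ω => φ (q i ω)) 2 μ := fun i =>
    MemLp.of_bound (hφ.comp (hq i)).aestronglyMeasurable M (ae_of_all _ fun ω => hφM _)
  have hpair : ((Finset.range n : Finset ℕ) : Set ℕ).Pairwise
      fun i j => IndepFun (fun ω => φ (q i ω)) (fun ω => φ (q j ω)) μ :=
    fun i _ j _ hij => (hindep.indepFun hij).comp hφ hφ
  refine (measure_lt_abs_sum_div_sub_one_le hb hε (fun i _ => hY i) hpair ?_).trans ?_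
  · simpa only [hintegral _ hφ, Finset.sum_const, Finset.card_range, nsmul_eq_mul] using hmean
  gcongr
  · have hS : MeasurableSet {x | F x ≠ φ x} := (measurableSet_eq_fun hF hφ).compl
    have hlaw' : ∀ i, μ {ω | F (q i ω) ≠ φ (q i ω)} = ν {x | F x ≠ φ x} := fun i => by
      rw [← hlaw i, Measure.map_apply (hq i) hS]
      rfl
    simp only [hlaw', Finset.sum_const, Finset.card_range, nsmul_eq_mul, le_refl]
  · calc ∑ i ∈ Finset.range n, variance (fun ω => φ (q i ω)) μ
        ≤ ∑ i ∈ Finset.range n, ∫ x, φ x ^ 2 ∂ν := Finset.sum_le_sum fun i _ =>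
          (variance_le_expectation_sq (hY i).aestronglyMeasurable).trans_eq
            (hintegral i (hφ.pow_const 2))
      _ = n * ∫ x, φ x ^ 2 ∂ν := by rw [Finset.sum_const, Finset.card_range, nsmul_eq_mul]

end Truncation

/-- The absolute value keeps the truncation bounded on `u < 0`, a null set for the laws below. -/
noncomputable def truncInv (c u : ℝ) : ℝ := min c |u|⁻¹

section TruncInv

variable {c u : ℝ}

lemma truncInv_nonneg (hc : 0 ≤ c) : 0 ≤ truncInv c u := le_min hc (inv_nonneg.2 (abs_nonneg u))

lemma truncInv_le : truncInv c u ≤ c := min_le_left _ _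

lemma abs_truncInv_le (hc : 0 ≤ c) : |truncInv c u| ≤ c := by
  rw [abs_of_nonneg (truncInv_nonneg hc)]
  exact truncInv_le

lemma truncInv_le_inv (hu : 0 < u) : truncInv c u ≤ u⁻¹ :=
  (min_le_right _ _).trans_eq (by rw [abs_of_pos hu])

lemma truncInv_of_le (hu : 0 < u) (huc : u ≤ c⁻¹) : truncInv c u = c := by
  have hc : 0 < c := inv_pos.1 (hu.trans_le huc)
  rw [truncInv, abs_of_pos hu, min_eq_left ((le_inv_comm₀ hc hu).2 huc)]

lemma truncInv_of_inv_le (hc : 0 < c) (huc : c⁻¹ ≤ u) : truncInv c u = u⁻¹ := by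
  have hu : 0 < u := (inv_pos.2 hc).trans_le huc
  rw [truncInv, abs_of_pos hu, min_eq_right ((inv_le_comm₀ hc hu).1 huc)]

@[fun_prop]
lemma measurable_truncInv : Measurable (truncInv c) := by
  unfold truncInv
  fun_prop

end TruncInv

section SplitIntegral

variable {ρ : Measure ℝ}

lemma integrable_truncInv_pow [IsFiniteMeasure ρ] {c : ℝ} (hc : 0 ≤ c) (k : ℕ) :
    Integrable (fun u => truncInv c u ^ k) ρ :=
  .of_bound (by fun_prop) (c ^ k) (ae_of_all _ fun u => by
    rw [Real.norm_eq_abs, abs_pow]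
    exact pow_le_pow_left₀ (abs_nonneg _) (abs_truncInv_le hc) k)

lemma integral_eq_setIntegral_Ioc_add_Ioc_add_Ioi (hpos : ∀ᵐ u ∂ρ, 0 < u) {φ : ℝ → ℝ}
    (hφ : Integrable φ ρ) {l a : ℝ} (hl : 0 ≤ l) (hla : l ≤ a) :
    ∫ u, φ u ∂ρ = ∫ u in Ioc 0 l, φ u ∂ρ + ∫ u in Ioc l a, φ u ∂ρ + ∫ u in Ioi a, φ u ∂ρ := by
  conv_lhs => rw [← Measure.restrict_eq_self_of_ae_mem (s := Ioi 0) hpos,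
    ← Ioc_union_Ioi_eq_Ioi (hl.trans hla)]
  rw [setIntegral_union (Ioc_disjoint_Ioi le_rfl) measurableSet_Ioi hφ.integrableOn hφ.integrableOn,
    ← Ioc_union_Ioc_eq_Ioc hl hla, setIntegral_union (Ioc_disjoint_Ioc_of_le le_rfl)
      measurableSet_Ioc hφ.integrableOn hφ.integrableOn]

lemma setIntegral_Ioc_truncInv_pow {c : ℝ} (k : ℕ) :
    ∫ u in Ioc 0 c⁻¹, truncInv c u ^ k ∂ρ = ρ.real (Ioc 0 c⁻¹) * c ^ k := by
  rw [setIntegral_congr_fun measurableSet_Ioc fun u hu => by rw [truncInv_of_le hu.1 hu.2],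
    setIntegral_const, smul_eq_mul]

lemma setIntegral_Ioi_truncInv_pow_mem_Icc [IsProbabilityMeasure ρ] {a c : ℝ} (ha : 0 < a)
    (hc : 0 ≤ c) (k : ℕ) :
    ∫ u in Ioi a, truncInv c u ^ k ∂ρ ∈ Icc 0 (a⁻¹ ^ k) := by
  have hint : Integrable (fun u => truncInv c u ^ k) ρ := integrable_truncInv_pow hc k
  refine ⟨setIntegral_nonneg measurableSet_Ioi fun u _ => pow_nonneg (truncInv_nonneg hc) k, ?_⟩
  calc ∫ u in Ioi a, truncInv c u ^ k ∂ρ ≤ ∫ _ in Ioi a, a⁻¹ ^ k ∂ρ :=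
        setIntegral_mono_on hint.integrableOn integrableOn_const measurableSet_Ioi
          fun u hu => pow_le_pow_left₀ (truncInv_nonneg hc)
            ((truncInv_le_inv (ha.trans hu)).trans (inv_anti₀ ha hu.le)) k
    _ = ρ.real (Ioi a) * a⁻¹ ^ k := by rw [setIntegral_const, smul_eq_mul]
    _ ≤ a⁻¹ ^ k := mul_le_of_le_one_left (by positivity) measureReal_le_one

end SplitIntegral

lemma setIntegral_withDensity_ofReal {α : Type*} [MeasurableSpace α] {μ : Measure α}
    {g : α → ℝ} (hg : Measurable g) (φ : α → ℝ) {s : Set α} (hs : MeasurableSet s) :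
    ∫ x in s, φ x ∂μ.withDensity (fun x => ENNReal.ofReal (g x)) =
      ∫ x in s, max (g x) 0 * φ x ∂μ := by
  rw [setIntegral_withDensity_eq_setIntegral_toReal_smul hg.ennreal_ofReal
    (ae_of_all _ fun _ => ENNReal.ofReal_lt_top) φ hs]
  simp only [ENNReal.toReal_ofReal', smul_eq_mul]

section DensityNearZero

variable {g : ℝ → ℝ} {a C δ : ℝ}

lemma le_one_add_of_abs_sub_one_le (hbound : ∀ u ∈ Ioc 0 a, |g u - 1| ≤ C * u ^ δ)
    (ha1 : a ≤ 1) (hC : 0 ≤ C) (hδ : 0 ≤ δ) {u : ℝ} (hu : u ∈ Ioc 0 a) : g u ≤ 1 + C := by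
  have hgu := (abs_le.1 (hbound u hu)).2
  have hpow : u ^ δ ≤ 1 := Real.rpow_le_one hu.1.le (hu.2.trans ha1) hδ
  nlinarith

lemma withDensity_Ioc_le (hbound : ∀ u ∈ Ioc 0 a, |g u - 1| ≤ C * u ^ δ) (ha1 : a ≤ 1)
    (hC : 0 ≤ C) (hδ : 0 ≤ δ) {t : ℝ} (ht : t ≤ a) :
    volume.withDensity (fun u => ENNReal.ofReal (g u)) (Ioc 0 t) ≤ ENNReal.ofReal ((1 + C) * t) := by
  rw [withDensity_apply _ measurableSet_Ioc]
  calc ∫⁻ u in Ioc 0 t, ENNReal.ofReal (g u)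
      ≤ ∫⁻ _ in Ioc 0 t, ENNReal.ofReal (1 + C) :=
        setLIntegral_mono' measurableSet_Ioc fun u hu => ENNReal.ofReal_le_ofReal
          (le_one_add_of_abs_sub_one_le hbound ha1 hC hδ ⟨hu.1, hu.2.trans ht⟩)
    _ = ENNReal.ofReal ((1 + C) * t) := by
      rw [setLIntegral_const, Real.volume_Ioc, sub_zero, ← ENNReal.ofReal_mul (by linarith)]

lemma abs_setIntegral_Ioc_inv_sub_log_le (hg : Measurable g)
    (hbound : ∀ u ∈ Ioc 0 a, |g u - 1| ≤ C * u ^ δ) (hC : 0 ≤ C) (hδ : 0 < δ) {l : ℝ} (hl : 0 < l)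
    (hla : l ≤ a) :
    |∫ u in Ioc l a, u⁻¹ ∂volume.withDensity (fun u => ENNReal.ofReal (g u)) - Real.log (a / l)|
      ≤ C * a ^ δ / δ := by
  have hinv : IntegrableOn (fun u : ℝ => u⁻¹) (Ioc l a) :=
    (intervalIntegral.intervalIntegrable_inv
      (fun u hu => (hl.trans_le (uIcc_of_le hla ▸ hu).1).ne')
      continuousOn_id).1
  have hrpow : IntegrableOn (fun u : ℝ => C * u ^ (δ - 1)) (Ioc l a) :=
    ((intervalIntegral.intervalIntegrable_rpow' (by linarith)).1).const_mul C
  have hdiff : ∀ u ∈ Ioc l a, ‖max (g u) 0 * u⁻¹ - u⁻¹‖ ≤ C * u ^ (δ - 1) := by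
    intro u hu
    have hu0 : 0 < u := hl.trans hu.1
    have hmax : |max (g u) 0 - 1| ≤ |g u - 1| := by
      simpa using abs_max_sub_max_le_abs (g u) 1 0
    rw [Real.norm_eq_abs, ← sub_one_mul, abs_mul, abs_inv, abs_of_pos hu0,
      Real.rpow_sub_one hu0.ne', ← mul_div_assoc, div_eq_mul_inv]
    exact mul_le_mul_of_nonneg_right (hmax.trans (hbound u ⟨hu0, hu.2⟩)) (by positivity)
  have hdiff_int : IntegrableOn (fun u => max (g u) 0 * u⁻¹ - u⁻¹) (Ioc l a) :=
    hrpow.mono' (by fun_prop) ((ae_restrict_iff' measurableSet_Ioc).2 (ae_of_all _ hdiff))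
  rw [setIntegral_withDensity_ofReal hg _ measurableSet_Ioc, ← integral_inv_of_pos hl
    (hl.trans_le hla), intervalIntegral.integral_of_le hla]
  have hf_int : IntegrableOn (fun u => max (g u) 0 * u⁻¹) (Ioc l a) := by
    simpa only [Pi.add_def, sub_add_cancel] using hdiff_int.add hinv
  calc _ = ‖∫ u in Ioc l a, (max (g u) 0 * u⁻¹ - u⁻¹)‖ := by
        rw [integral_sub hf_int hinv, Real.norm_eq_abs]
    _ ≤ ∫ u in Ioc l a, C * u ^ (δ - 1) :=
        norm_integral_le_of_norm_le hrpow ((ae_restrict_iff' measurableSet_Ioc).2 (ae_of_all _ hdiff))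
    _ = C * ((a ^ δ - l ^ δ) / δ) := by
        rw [← intervalIntegral.integral_of_le hla, intervalIntegral.integral_const_mul,
          integral_rpow (Or.inl (by linarith)), sub_add_cancel]
    _ ≤ C * a ^ δ / δ := by
        rw [mul_div_assoc]
        have : 0 ≤ l ^ δ := Real.rpow_nonneg hl.le δ
        gcongr
        linarith

lemma setIntegral_Ioc_inv_sq_le (hg : Measurable g)
    (hbound : ∀ u ∈ Ioc 0 a, |g u - 1| ≤ C * u ^ δ) (ha1 : a ≤ 1) (hC : 0 ≤ C) (hδ : 0 ≤ δ) {l : ℝ} (hl : 0 < l) (hla : l ≤ a) :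
    ∫ u in Ioc l a, u⁻¹ ^ 2 ∂volume.withDensity (fun u => ENNReal.ofReal (g u)) ≤ (1 + C) * l⁻¹ := by
  have hinv_sq : IntegrableOn (fun u : ℝ => (1 + C) * u⁻¹ ^ 2) (Ioc l a) := by
    refine ContinuousOn.integrableOn_Icc ?_ |>.mono_set Ioc_subset_Icc_self
    exact continuousOn_const.mul ((continuousOn_inv₀.mono fun u hu =>
      (hl.trans_le hu.1).ne').pow 2)
  rw [setIntegral_withDensity_ofReal hg _ measurableSet_Ioc]
  calc ∫ u in Ioc l a, max (g u) 0 * u⁻¹ ^ 2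
      ≤ ∫ u in Ioc l a, (1 + C) * u⁻¹ ^ 2 :=
        integral_mono_of_nonneg (ae_of_all _ fun u => by positivity) hinv_sq
          ((ae_restrict_iff' measurableSet_Ioc).2 (ae_of_all _ fun u hu =>
            mul_le_mul_of_nonneg_right (max_le (le_one_add_of_abs_sub_one_le hbound ha1 hC hδ
              ⟨hl.trans hu.1, hu.2⟩) (by linarith)) (by positivity)))
    _ = (1 + C) * (l⁻¹ - a⁻¹) := by
      rw [← intervalIntegral.integral_of_le hla, intervalIntegral.integral_const_mul]
      congr 1
      have h0 : (0 : ℝ) ∉ uIcc l a := fun h => (hl.trans_le (uIcc_of_le hla ▸ h).1).false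
      simp_rw [← zpow_natCast, ← zpow_neg_one, ← zpow_mul]
      rw [integral_zpow (Or.inr ⟨by norm_num, h0⟩)]
      norm_num
      ring
    _ ≤ (1 + C) * l⁻¹ := by
      have : 0 ≤ a⁻¹ := inv_nonneg.2 (hl.le.trans hla)
      gcongr
      linarith

variable {c : ℝ}

theorem abs_integral_truncInv_sub_log_le (hg : Measurable g)
    [IsProbabilityMeasure (volume.withDensity fun u => ENNReal.ofReal (g u))]
    (hpos : ∀ᵐ u ∂volume.withDensity (fun u => ENNReal.ofReal (g u)), 0 < u)
    (hbound : ∀ u ∈ Ioc 0 a, |g u - 1| ≤ C * u ^ δ) (ha : 0 < a) (ha1 : a ≤ 1) (hC : 0 ≤ C)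
    (hδ : 0 < δ) (hc : a⁻¹ ≤ c) :
    |∫ u, truncInv c u ∂volume.withDensity (fun u => ENNReal.ofReal (g u)) - Real.log c|
      ≤ 1 + C + |Real.log a| + C / δ + a⁻¹ := by
  set ρ := volume.withDensity fun u => ENNReal.ofReal (g u)
  have hc0 : 0 < c := (inv_pos.2 ha).trans_le hc
  have hca : c⁻¹ ≤ a := inv_le_of_inv_le₀ ha hc
  have h1 : ∫ u in Ioc 0 c⁻¹, truncInv c u ∂ρ ≤ 1 + C := by
    have htail : ρ.real (Ioc 0 c⁻¹) ≤ (1 + C) * c⁻¹ :=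
      ENNReal.toReal_le_of_le_ofReal (by positivity)
        (withDensity_Ioc_le hbound ha1 hC hδ.le hca)
    have := setIntegral_Ioc_truncInv_pow (ρ := ρ) (c := c) 1
    simp only [pow_one] at this
    rw [this]
    calc ρ.real (Ioc 0 c⁻¹) * c ≤ (1 + C) * c⁻¹ * c := by gcongr
      _ = 1 + C := by field_simp
  have h1' : 0 ≤ ∫ u in Ioc 0 c⁻¹, truncInv c u ∂ρ :=
    setIntegral_nonneg measurableSet_Ioc fun u _ => truncInv_nonneg hc0.le
  have h2 : |∫ u in Ioc c⁻¹ a, truncInv c u ∂ρ - (Real.log a + Real.log c)| ≤ C / δ := by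
    rw [setIntegral_congr_fun measurableSet_Ioc fun u hu => truncInv_of_inv_le hc0 hu.1.le,
      ← Real.log_mul ha.ne' hc0.ne', ← div_inv_eq_mul]
    refine (abs_setIntegral_Ioc_inv_sub_log_le hg hbound hC hδ (inv_pos.2 hc0) hca).trans ?_
    have : a ^ δ ≤ 1 := Real.rpow_le_one ha.le ha1 hδ.le
    gcongr
    exact mul_le_of_le_one_right hC this
  have h3 := setIntegral_Ioi_truncInv_pow_mem_Icc (ρ := ρ) ha hc0.le 1
  simp only [pow_one] at h3
  have hint : Integrable (truncInv c) ρ := by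
    simpa using integrable_truncInv_pow (ρ := ρ) hc0.le 1
  rw [integral_eq_setIntegral_Ioc_add_Ioc_add_Ioi hpos hint (inv_nonneg.2 hc0.le) hca]
  rw [abs_le] at h2 ⊢
  constructor <;> linarith [neg_abs_le (Real.log a), le_abs_self (Real.log a), h3.1, h3.2]

theorem integral_truncInv_sq_le (hg : Measurable g)
    [IsProbabilityMeasure (volume.withDensity fun u => ENNReal.ofReal (g u))]
    (hpos : ∀ᵐ u ∂volume.withDensity (fun u => ENNReal.ofReal (g u)), 0 < u)
    (hbound : ∀ u ∈ Ioc 0 a, |g u - 1| ≤ C * u ^ δ) (ha : 0 < a) (ha1 : a ≤ 1) (hC : 0 ≤ C)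
    (hδ : 0 ≤ δ) (hc : a⁻¹ ≤ c) :
    ∫ u, truncInv c u ^ 2 ∂volume.withDensity (fun u => ENNReal.ofReal (g u))
      ≤ (a⁻¹ ^ 2 + 2 * (1 + C)) * c := by
  set ρ := volume.withDensity fun u => ENNReal.ofReal (g u)
  have hc0 : 0 < c := (inv_pos.2 ha).trans_le hc
  have hca : c⁻¹ ≤ a := inv_le_of_inv_le₀ ha hc
  have hc1 : 1 ≤ c := (one_le_inv₀ ha).2 ha1 |>.trans hc
  have h1 : ∫ u in Ioc 0 c⁻¹, truncInv c u ^ 2 ∂ρ ≤ (1 + C) * c := by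
    have htail : ρ.real (Ioc 0 c⁻¹) ≤ (1 + C) * c⁻¹ :=
      ENNReal.toReal_le_of_le_ofReal (by positivity) (withDensity_Ioc_le hbound ha1 hC hδ hca)
    rw [setIntegral_Ioc_truncInv_pow]
    calc ρ.real (Ioc 0 c⁻¹) * c ^ 2 ≤ (1 + C) * c⁻¹ * c ^ 2 := by gcongr
      _ = (1 + C) * c := by field_simp
  have h2 : ∫ u in Ioc c⁻¹ a, truncInv c u ^ 2 ∂ρ ≤ (1 + C) * c := by
    rw [setIntegral_congr_fun measurableSet_Ioc fun u hu => by
      rw [truncInv_of_inv_le hc0 hu.1.le]]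
    simpa using setIntegral_Ioc_inv_sq_le hg hbound ha1 hC hδ (inv_pos.2 hc0) hca
  have h3 := (setIntegral_Ioi_truncInv_pow_mem_Icc (ρ := ρ) ha hc0.le 2).2
  rw [integral_eq_setIntegral_Ioc_add_Ioc_add_Ioi hpos (integrable_truncInv_pow hc0.le 2)
    (inv_nonneg.2 hc0.le) hca]
  have : a⁻¹ ^ 2 ≤ a⁻¹ ^ 2 * c := le_mul_of_one_le_right (by positivity) hc1
  linarith

end DensityNearZero

lemma exists_forall_Ioc_abs_le_of_isBigO {h : ℝ → ℝ} {δ : ℝ}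
    (hh : h =O[𝓝[>] 0] fun u => u ^ δ) :
    ∃ a C : ℝ, 0 < a ∧ a ≤ 1 ∧ 0 ≤ C ∧ ∀ u ∈ Ioc 0 a, |h u| ≤ C * u ^ δ := by
  obtain ⟨C, hC, hCh⟩ := hh.exists_nonneg
  obtain ⟨b, hb, hbh⟩ := (nhdsGT_basis 0).eventually_iff.1 hCh.bound
  refine ⟨min (b / 2) 1, C, by positivity, min_le_right _ _, hC, fun u hu => ?_⟩
  have := hbh ⟨hu.1, hu.2.trans_lt ((min_le_left _ _).trans_lt (half_lt_self hb))⟩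
  rwa [Real.norm_eq_abs, Real.norm_of_nonneg (Real.rpow_nonneg hu.1.le δ)] at this

lemma eventually_add_abs_log_log_le (K : ℝ) {η : ℝ} (hη : 0 < η) :
    ∀ᶠ n : ℕ in atTop, K + |Real.log (Real.log n)| ≤ η * Real.log n := by
  have hlog : Tendsto (fun n : ℕ => Real.log n) atTop atTop :=
    Real.tendsto_log_atTop.comp tendsto_natCast_atTop_atTop
  have hratio : Tendsto (fun n : ℕ => (K + |Real.log (Real.log n)|) / Real.log n) atTop (𝓝 0) := by
    have h := (hlog.inv_tendsto_atTop.const_mul K).add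
      ((Real.isLittleO_log_id_atTop.norm_left.tendsto_div_nhds_zero).comp hlog)
    simp only [mul_zero, add_zero] at h
    refine h.congr fun n => ?_
    simp [div_eq_mul_inv, add_mul]
  filter_upwards [hratio.eventually_lt_const hη, hlog.eventually_gt_atTop 0] with n hn hpos
  exact ((div_lt_iff₀ hpos).1 hn).le

lemma map_one_sub_eq_withDensity {Ω : Type*} [MeasurableSpace Ω] {μ : Measure Ω} {X : Ω → ℝ}
    (hX : Measurable X) {F : ℝ → ℝ≥0∞} (hF : Measurable F)
    (hlaw : μ.map X = volume.withDensity F) :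
    μ.map (fun ω => 1 - X ω) = volume.withDensity fun u => F (1 - u) := by
  have hm : Measurable fun x : ℝ => 1 - x := by fun_prop
  ext s hs
  rw [← Function.comp_def (fun x => 1 - x) X, ← Measure.map_map hm hX, hlaw,
    Measure.map_apply hm hs, withDensity_apply _ (hm hs), withDensity_apply _ hs,
    ← (Measure.measurePreserving_sub_left volume 1).setLIntegral_comp_preimage hs
      (f := fun u => F (1 - u)) (hF.comp hm)]
  simp only [sub_sub_cancel]

lemma ae_pos_of_map_eq {Ω : Type*} [MeasurableSpace Ω] {μ : Measure Ω} {X : Ω → ℝ}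
    (hX : Measurable X) (hX0 : ∀ ω, 0 ≤ X ω) {ν : Measure ℝ} (hlaw : μ.map X = ν)
    (hν : ν ≪ volume) : ∀ᵐ u ∂ν, 0 < u := by
  have hnonneg : ∀ᵐ u ∂ν, 0 ≤ u :=
    hlaw ▸ (ae_map_iff hX.aemeasurable measurableSet_Ici).2 (ae_of_all _ hX0)
  filter_upwards [hnonneg, hν.ae_le (Measure.ae_ne volume 0)] with u h0 h1 using h0.lt_of_ne' h1

lemma abs_mul_sub_mul_log_le {m K ε : ℝ} {n : ℕ} (hn : 0 < (n : ℝ)) (hlogn : 0 < Real.log n)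
    (hm : |m - Real.log (n * Real.log n)| ≤ K)
    (hK : K + |Real.log (Real.log n)| ≤ ε / 2 * Real.log n) :
    |n * m - n * Real.log n| ≤ ε / 2 * (n * Real.log n) := by
  rw [Real.log_mul hn.ne' hlogn.ne'] at hm
  calc |n * m - n * Real.log n|
      = n * |(m - (Real.log n + Real.log (Real.log n))) + Real.log (Real.log n)| := by
        rw [← abs_of_pos hn, ← abs_mul, abs_of_pos hn]
        ring_nf
    _ ≤ n * (ε / 2 * Real.log n) := by
        gcongr
        exact (abs_add_le _ _).trans (by linarith)
    _ = ε / 2 * (n * Real.log n) := by ring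

theorem measure_lt_abs_sum_inv_div_sub_one_le {Ω : Type*} [MeasurableSpace Ω] {μ : Measure Ω}
    [IsProbabilityMeasure μ] {q : ℕ → Ω → ℝ} (hq : ∀ i, Measurable (q i))
    (hindep : iIndepFun q μ) {g : ℝ → ℝ} (hg : Measurable g)
    (hlaw : ∀ i, μ.map (q i) = volume.withDensity fun u => ENNReal.ofReal (g u))
    (hpos : ∀ᵐ u ∂volume.withDensity (fun u => ENNReal.ofReal (g u)), 0 < u) {a C δ : ℝ}
    (hbound : ∀ u ∈ Ioc 0 a, |g u - 1| ≤ C * u ^ δ) (ha : 0 < a) (ha1 : a ≤ 1) (hC : 0 ≤ C)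
    (hδ : 0 < δ) {ε : ℝ} (hε : 0 < ε) {n : ℕ} (hn : a⁻¹ ≤ n * Real.log n)
    (hlog : 1 + C + |Real.log a| + C / δ + a⁻¹ + |Real.log (Real.log n)| ≤ ε / 2 * Real.log n) :
    μ {ω | ε < |(∑ i ∈ Finset.range n, (q i ω)⁻¹) / (n * Real.log n) - 1|} ≤
      ENNReal.ofReal ((1 + C + (a⁻¹ ^ 2 + 2 * (1 + C)) / (ε / 2) ^ 2) / Real.log n) := by
  set ρ := volume.withDensity fun u => ENNReal.ofReal (g u)
  set c : ℝ := n * Real.log n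
  have hc0 : 0 < c := (inv_pos.2 ha).trans_le hn
  obtain ⟨hn0, hlogn⟩ : (0 : ℝ) < n ∧ 0 < Real.log n :=
    (pos_and_pos_or_neg_and_neg_of_mul_pos hc0).resolve_right fun h => h.1.not_ge n.cast_nonneg
  have : IsProbabilityMeasure ρ := hlaw 0 ▸ Measure.isProbabilityMeasure_map (hq 0).aemeasurable
  have hmean : |n * ∫ u, truncInv c u ∂ρ - c| ≤ ε / 2 * c := abs_mul_sub_mul_log_le hn0 hlogn
    (abs_integral_truncInv_sub_log_le hg hpos hbound ha ha1 hC hδ hn) hlog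
  have htail : ρ {u | u⁻¹ ≠ truncInv c u} ≤ ENNReal.ofReal ((1 + C) * c⁻¹) := by
    refine (measure_mono_ae (hpos.mono fun u hu hne => ⟨hu, ?_⟩)).trans
      (withDensity_Ioc_le hbound ha1 hC hδ.le (inv_le_of_inv_le₀ ha hn))
    by_contra hlt
    exact hne (truncInv_of_inv_le hc0 (not_le.1 hlt).le).symm
  refine (measure_lt_abs_sum_div_sub_one_le_of_iIndepFun hq hindep hlaw measurable_inv
    measurable_truncInv (fun _ => abs_truncInv_le hc0.le) hc0 hε hmean).trans ?_
  calc (n : ℝ≥0∞) * ρ {u | u⁻¹ ≠ truncInv c u} +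
        ENNReal.ofReal (n * (∫ u, truncInv c u ^ 2 ∂ρ) / (ε / 2 * c) ^ 2)
      ≤ (n : ℝ≥0∞) * ENNReal.ofReal ((1 + C) * c⁻¹) +
        ENNReal.ofReal (n * ((a⁻¹ ^ 2 + 2 * (1 + C)) * c) / (ε / 2 * c) ^ 2) := by
        gcongr
        exact integral_truncInv_sq_le hg hpos hbound ha ha1 hC hδ.le hn
    _ = _ := by
        rw [← ENNReal.ofReal_natCast, ← ENNReal.ofReal_mul n.cast_nonneg,
          ← ENNReal.ofReal_add (by positivity) (by positivity)]
        congr 1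
        field_simp
        ring

/-- Let `p_1, p_2, …` be i.i.d. with values in `[0,1]` and common density `f`
satisfying `f(1−x) = 1 + O(x^δ)` as `x → 0⁺` for some `δ > 0` (the case `β = 0`).  Set
`S_n = ∑_{i=1}^n 1/(1 − p_i)`.  Then for every `ε > 0`,
`P(|S_n/(n log n) − 1| > ε) → 0` as `n → ∞`. -/
theorem sum_inv_one_sub_lln_beta_zero
    {Ω : Type*} [MeasureSpace Ω] [IsProbabilityMeasure (ℙ : Measure Ω)]
    (p : ℕ → Ω → ℝ) (hmeas : ∀ i, Measurable (p i))
    (hval : ∀ i ω, p i ω ∈ Set.Icc (0 : ℝ) 1)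
    (hindep : iIndepFun p ℙ)
    (f : ℝ → ℝ) (hf : Measurable f)
    (hdist : ∀ i, Measure.map (p i) ℙ =
      MeasureTheory.volume.withDensity (fun x => ENNReal.ofReal (f x)))
    (δ : ℝ) (hδ : 0 < δ)
    (hasymp : Asymptotics.IsBigO (nhdsWithin 0 (Set.Ioi (0 : ℝ)))
      (fun x => f (1 - x) - 1) (fun x => x ^ δ)) :
    ∀ ε : ℝ, 0 < ε →
      Filter.Tendsto
        (fun n : ℕ =>
          (ℙ {ω | ε < |(∑ i ∈ Finset.range n, 1 / (1 - p i ω)) / (n * Real.log n) - 1|}).toReal)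
        Filter.atTop (nhds 0) := by
  intro ε hε
  obtain ⟨a, C, ha, ha1, hC, hbound⟩ := exists_forall_Ioc_abs_le_of_isBigO hasymp
  have hq : ∀ i, Measurable fun ω => 1 - p i ω := fun i => measurable_const.sub (hmeas i)
  have hlaw : ∀ i, Measure.map (fun ω => 1 - p i ω) ℙ =
      volume.withDensity fun u => ENNReal.ofReal (f (1 - u)) := fun i =>
    map_one_sub_eq_withDensity (hmeas i) (F := fun x => ENNReal.ofReal (f x)) hf.ennreal_ofReal
      (hdist i)
  have hpos : ∀ᵐ u ∂volume.withDensity (fun u => ENNReal.ofReal (f (1 - u))), 0 < u :=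
    ae_pos_of_map_eq (hq 0) (fun ω => sub_nonneg.2 (hval 0 ω).2) (hlaw 0)
      (withDensity_absolutelyContinuous _ _)
  have hlog : Tendsto (fun n : ℕ => Real.log n) atTop atTop :=
    Real.tendsto_log_atTop.comp tendsto_natCast_atTop_atTop
  set K := 1 + C + (a⁻¹ ^ 2 + 2 * (1 + C)) / (ε / 2) ^ 2
  refine squeeze_zero' (Eventually.of_forall fun n => ENNReal.toReal_nonneg) ?_
    (by simpa [div_eq_mul_inv] using hlog.inv_tendsto_atTop.const_mul K)
  filter_upwards [(tendsto_natCast_atTop_atTop.atTop_mul_atTop₀ hlog).eventually_ge_atTop a⁻¹,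
    eventually_add_abs_log_log_le (1 + C + |Real.log a| + C / δ + a⁻¹) (half_pos hε)] with n hn hK
  simp only [one_div]
  exact ENNReal.toReal_le_of_le_ofReal (by positivity) (measure_lt_abs_sum_inv_div_sub_one_le
    hq (hindep.comp _ fun _ => by fun_prop) (hf.comp (by fun_prop)) hlaw hpos
    (fun u hu => by simpa using hbound u hu) ha ha1 hC hδ hε hn hK)
end
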